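/- arXiv:2506.02655 — 7 statements merged into one kernel-verified Lean document; each statement's English description precedes it below -/
import Mathlib

section
/- Let E be a finite set partitioned into disjoint nonempty blocks E = E_1 ∪ … ∪ E_k, and let p_u ∈ [0,1] for each u ∈ E satisfy Σ_{u ∈ E_ℓ} p_u = 1 for every ℓ ∈ {1,…,k}. Let π be the distribution on subsets of E that, independently for each block ℓ, includes exactly one element of E_ℓ chosen with probabilities (p_u)_{u ∈ E_ℓ}, and let π̂ be the distribution that includes each element u ∈ E independently with probability p_u. Then for every nonnegative monotone submodular function f : 2^E → ℝ≥0 it holds that E_{X∼π}[f(X)] ≥ E_{X∼π̂}[f(X)]. -/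
open Finset

/-- A set function is monotone if it is nondecreasing with respect to inclusion. -/
def MonotoneFn {α : Type*} (f : Finset α → ℝ) : Prop :=
  ∀ ⦃X Y : Finset α⦄, X ⊆ Y → f X ≤ f Y

/-- A set function is submodular if marginal gains diminish as the set grows. -/
def SubmodularFn {α : Type*} [DecidableEq α] (f : Finset α → ℝ) : Prop :=
  ∀ ⦃X Y : Finset α⦄, X ⊆ Y → ∀ u, u ∉ Y → f (insert u Y) - f Y ≤ f (insert u X) - f X

/-!
Both distributions factor over the blocks, so the independent sample can be replaced by the
one-element choice one block at a time. For a single block `S` with `∑ u ∈ S, p u = 1`,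
submodularity gives `f T ≤ f ∅ + ∑ u ∈ T, (f {u} - f ∅)`, and the expectation of this affine
bound under the independent sample of `S` is exactly `∑ u ∈ S, p u * f {u}`, the one-per-block
expectation. Fixing the other blocks to `A` leaves the submodular function `X ↦ f (X ∪ A)`, so
induction over the blocks finishes the proof.
-/

namespace SubmodularFn

variable {E : Type*} [DecidableEq E] {f : Finset E → ℝ}

theorem comp_union_right (hf : SubmodularFn f) (A : Finset E) :
    SubmodularFn fun X => f (X ∪ A) := by
  intro X Y hXY u hu
  by_cases huA : u ∈ A
  · simp [insert_union, insert_eq_self.2 (mem_union_right _ huA)]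
  · simp only [insert_union]
    exact hf (union_subset_union_left hXY) u (by simp [hu, huA])

theorem comp_union_left (hf : SubmodularFn f) (A : Finset E) :
    SubmodularFn fun X => f (A ∪ X) := by
  simpa only [union_comm A] using hf.comp_union_right A

theorem le_add_sum_sub (hf : SubmodularFn f) (T : Finset E) :
    f T ≤ f ∅ + ∑ u ∈ T, (f {u} - f ∅) := by
  induction T using Finset.induction_on with
  | empty => simp
  | @insert a T ha ih =>
    have h := hf (empty_subset T) a ha
    rw [sum_insert ha]
    simp only [insert_empty] at h
    linarith

end SubmodularFn

section Independent

variable {E : Type*} [DecidableEq E]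

def indepProb (p : E → ℝ) (S X : Finset E) : ℝ :=
  (∏ u ∈ X, p u) * ∏ u ∈ S \ X, (1 - p u)

def indepExp (p : E → ℝ) (S : Finset E) (F : Finset E → ℝ) : ℝ :=
  ∑ X ∈ S.powerset, indepProb p S X * F X

variable {p : E → ℝ}

theorem indepProb_nonneg (hp0 : ∀ u, 0 ≤ p u) (hp1 : ∀ u, p u ≤ 1) (S X : Finset E) :
    0 ≤ indepProb p S X :=
  mul_nonneg (prod_nonneg fun u _ => hp0 u) (prod_nonneg fun u _ => sub_nonneg.2 (hp1 u))

theorem indepExp_mono (hp0 : ∀ u, 0 ≤ p u) (hp1 : ∀ u, p u ≤ 1) {S : Finset E}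
    {F G : Finset E → ℝ} (h : ∀ X ⊆ S, F X ≤ G X) : indepExp p S F ≤ indepExp p S G :=
  sum_le_sum fun X hX =>
    mul_le_mul_of_nonneg_left (h X (mem_powerset.1 hX)) (indepProb_nonneg hp0 hp1 S X)

theorem indepExp_empty (F : Finset E → ℝ) : indepExp p ∅ F = F ∅ := by
  simp [indepExp, indepProb]

theorem indepExp_insert {a : E} {S : Finset E} (ha : a ∉ S) (F : Finset E → ℝ) :
    indepExp p (insert a S) F
      = (1 - p a) * indepExp p S F + p a * indepExp p S fun X => F (insert a X) := by
  simp only [indepExp, sum_powerset_insert ha, mul_sum]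
  congr 1 <;> refine sum_congr rfl fun X hX => ?_
  · have haX : a ∉ X := fun h => ha (mem_powerset.1 hX h)
    rw [indepProb, indepProb, insert_sdiff_of_notMem _ haX,
      prod_insert fun h => ha (mem_sdiff.1 h).1]
    ring
  · have haX : a ∉ X := fun h => ha (mem_powerset.1 hX h)
    rw [indepProb, indepProb, insert_sdiff_insert, sdiff_insert_of_notMem ha, prod_insert haX]
    ring

theorem indepExp_congr {S : Finset E} {F G : Finset E → ℝ} (h : ∀ X ⊆ S, F X = G X) :
    indepExp p S F = indepExp p S G :=
  sum_congr rfl fun X hX => by rw [h X (mem_powerset.1 hX)]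

theorem indepExp_affine (S : Finset E) (a : ℝ) (b : E → ℝ) :
    indepExp p S (fun X => a + ∑ u ∈ X, b u) = a + ∑ u ∈ S, p u * b u := by
  induction S using Finset.induction_on generalizing a with
  | empty => simp [indepExp_empty]
  | @insert x S hx ih =>
    have hb : ∀ X ⊆ S, a + ∑ u ∈ insert x X, b u = (a + b x) + ∑ u ∈ X, b u :=
      fun X hX => by rw [sum_insert fun h => hx (hX h), add_assoc]
    rw [indepExp_insert hx, ih, indepExp_congr hb, ih, sum_insert hx]
    ring

theorem indepExp_le_sum_singleton (hp0 : ∀ u, 0 ≤ p u) (hp1 : ∀ u, p u ≤ 1) {S : Finset E}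
    (hS : ∑ u ∈ S, p u = 1) {f : Finset E → ℝ} (hf : SubmodularFn f) :
    indepExp p S f ≤ ∑ u ∈ S, p u * f {u} :=
  calc indepExp p S f
      ≤ indepExp p S fun X => f ∅ + ∑ u ∈ X, (f {u} - f ∅) :=
        indepExp_mono hp0 hp1 fun X _ => hf.le_add_sum_sub X
    _ = f ∅ + ∑ u ∈ S, p u * (f {u} - f ∅) := indepExp_affine S _ _
    _ = ∑ u ∈ S, p u * f {u} := by
        simp only [mul_sub, sum_sub_distrib, ← sum_mul, hS]
        ring

theorem indepExp_union {A D : Finset E} (h : Disjoint A D) (F : Finset E → ℝ) :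
    indepExp p (A ∪ D) F = indepExp p A fun T => indepExp p D fun Y => F (T ∪ Y) := by
  induction A using Finset.induction_on generalizing F with
  | empty => simp [indepExp_empty]
  | @insert a A ha ih =>
    have hD := disjoint_insert_left.1 h
    rw [insert_union, indepExp_insert (by simp [ha, hD.1]), indepExp_insert ha, ih hD.2,
      ih hD.2]
    simp only [insert_union]

end Independent

theorem Fintype.sum_piFinset_sum_update_swap {ι α M : Type*} [Fintype ι] [DecidableEq ι]
    [AddCommMonoid M] (t : ι → Finset α) (i : ι) (G : (ι → α) → α → M) :
    ∑ c ∈ Fintype.piFinset t, ∑ u ∈ t i, G (Function.update c i u) (c i)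
      = ∑ c ∈ Fintype.piFinset t, ∑ u ∈ t i, G c u := by
  -- `(c, u) ↦ (update c i u, c i)` is an involution of `piFinset t ×ˢ t i`.
  rw [← sum_product', ← sum_product']
  have hmem : ∀ q ∈ Fintype.piFinset t ×ˢ t i,
      (Function.update q.1 i q.2, q.1 i) ∈ Fintype.piFinset t ×ˢ t i := by
    intro q hq
    simp only [mem_product, Fintype.mem_piFinset] at hq ⊢
    refine ⟨fun j => ?_, hq.1 i⟩
    rcases eq_or_ne j i with rfl | hj
    · simpa using hq.2
    · simpa [hj] using hq.1 j
  exact sum_nbij' (fun q => (Function.update q.1 i q.2, q.1 i))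
    (fun q => (Function.update q.1 i q.2, q.1 i)) hmem hmem (by simp) (by simp) (by simp)

section Blocks

variable {E ι : Type*} [DecidableEq E] [Fintype ι] [DecidableEq ι]

-- Every block `ℓ` picks `c ℓ ∈ B ℓ`; only the picks of the blocks in `s` enter `F`.
def blockExp (B : ι → Finset E) (p : E → ℝ) (s : Finset ι) (F : Finset E → ℝ) : ℝ :=
  ∑ c ∈ Fintype.piFinset B, (∏ ℓ, p (c ℓ)) * F (s.image c)

variable {B : ι → Finset E} {p : E → ℝ}

theorem blockExp_empty (hpsum : ∀ ℓ, ∑ u ∈ B ℓ, p u = 1) (F : Finset E → ℝ) :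
    blockExp B p ∅ F = F ∅ := by
  simp_rw [blockExp, image_empty]
  rw [← sum_mul, ← prod_univ_sum, prod_eq_one fun ℓ _ => hpsum ℓ, one_mul]

theorem blockExp_mono (hp0 : ∀ u, 0 ≤ p u) (s : Finset ι) {F G : Finset E → ℝ}
    (h : ∀ Y, F Y ≤ G Y) : blockExp B p s F ≤ blockExp B p s G :=
  sum_le_sum fun _ _ => mul_le_mul_of_nonneg_left (h _) (prod_nonneg fun _ _ => hp0 _)

theorem blockExp_insert {ℓ₀ : ι} (hB : ∑ u ∈ B ℓ₀, p u = 1) {s : Finset ι} (hs : ℓ₀ ∉ s)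
    (F : Finset E → ℝ) :
    blockExp B p (insert ℓ₀ s) F = blockExp B p s fun Y => ∑ u ∈ B ℓ₀, p u * F (insert u Y) := by
  have himage : ∀ (c : ι → E) u, s.image (Function.update c ℓ₀ u) = s.image c := fun c u =>
    image_congr fun ℓ hℓ => Function.update_of_ne (ne_of_mem_of_not_mem hℓ hs) _ _
  have hprod : ∀ (c : ι → E) u,
      ∏ ℓ, p (Function.update c ℓ₀ u ℓ) = p u * ∏ ℓ ∈ univ \ {ℓ₀}, p (c ℓ) := fun c u => by
    simp_rw [Function.apply_update (fun _ => p)]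
    rw [prod_update_of_mem (mem_univ ℓ₀)]
  have hsplit : ∀ c : ι → E, ∏ ℓ, p (c ℓ) = p (c ℓ₀) * ∏ ℓ ∈ univ \ {ℓ₀}, p (c ℓ) := fun c =>
    by rw [← hprod c (c ℓ₀), Function.update_eq_self]
  calc blockExp B p (insert ℓ₀ s) F
      = ∑ c ∈ Fintype.piFinset B, ∑ u ∈ B ℓ₀,
          p u * ((∏ ℓ, p (c ℓ)) * F (insert (c ℓ₀) (s.image c))) := by
        simp only [blockExp, image_insert, ← sum_mul, hB, one_mul]
    _ = ∑ c ∈ Fintype.piFinset B, ∑ u ∈ B ℓ₀,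
          p (c ℓ₀) * ((∏ ℓ, p (Function.update c ℓ₀ u ℓ)) *
            F (insert (Function.update c ℓ₀ u ℓ₀) (s.image (Function.update c ℓ₀ u)))) :=
        (Fintype.sum_piFinset_sum_update_swap B ℓ₀ _).symm
    _ = blockExp B p s fun Y => ∑ u ∈ B ℓ₀, p u * F (insert u Y) := by
        simp only [blockExp, mul_sum, Function.update_self, himage, hprod, hsplit]
        exact sum_congr rfl fun c _ => sum_congr rfl fun u _ => by ring

theorem indepExp_blockExp_comm (S : Finset E) (s : Finset ι) (F : Finset E → Finset E → ℝ) :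
    (indepExp p S fun T => blockExp B p s (F T))
      = blockExp B p s fun Y => indepExp p S (F · Y) := by
  simp only [indepExp, blockExp, mul_sum]
  rw [sum_comm]
  exact sum_congr rfl fun c _ => sum_congr rfl fun X _ => by ring

theorem indepExp_biUnion_le_blockExp (hBdisj : ∀ ℓ ℓ', ℓ ≠ ℓ' → Disjoint (B ℓ) (B ℓ'))
    (hp0 : ∀ u, 0 ≤ p u) (hp1 : ∀ u, p u ≤ 1) (hpsum : ∀ ℓ, ∑ u ∈ B ℓ, p u = 1) (s : Finset ι)
    {f : Finset E → ℝ} (hf : SubmodularFn f) :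
    indepExp p (s.biUnion B) f ≤ blockExp B p s f := by
  induction s using Finset.induction_on generalizing f with
  | empty => rw [biUnion_empty, indepExp_empty, blockExp_empty hpsum]
  | @insert ℓ₀ s hℓ₀ ih =>
    have hdisj : Disjoint (B ℓ₀) (s.biUnion B) :=
      (disjoint_biUnion_right _ _ _).2 fun ℓ hℓ =>
        hBdisj ℓ₀ ℓ (ne_of_mem_of_not_mem hℓ hℓ₀).symm
    calc indepExp p ((insert ℓ₀ s).biUnion B) f
        = indepExp p (B ℓ₀) fun T => indepExp p (s.biUnion B) fun Y => f (T ∪ Y) := by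
          rw [biUnion_insert, indepExp_union hdisj]
      _ ≤ indepExp p (B ℓ₀) fun T => blockExp B p s fun Y => f (T ∪ Y) :=
          indepExp_mono hp0 hp1 fun T _ => ih (hf.comp_union_left T)
      _ = blockExp B p s fun Y => indepExp p (B ℓ₀) fun T => f (T ∪ Y) :=
          indepExp_blockExp_comm _ _ _
      _ ≤ blockExp B p s fun Y => ∑ u ∈ B ℓ₀, p u * f (insert u Y) :=
          blockExp_mono hp0 s fun Y => by
            simpa only [← insert_eq] using
              indepExp_le_sum_singleton hp0 hp1 (hpsum ℓ₀) (hf.comp_union_right Y)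
      _ = blockExp B p (insert ℓ₀ s) f := (blockExp_insert (hpsum ℓ₀) hℓ₀ f).symm

end Blocks

theorem expectation_one_per_block_ge_independent_general
    {E ι : Type*} [Fintype E] [DecidableEq E] [Fintype ι] [DecidableEq ι]
    (B : ι → Finset E)
    (hBdisj : ∀ ℓ ℓ', ℓ ≠ ℓ' → Disjoint (B ℓ) (B ℓ'))
    (hBcover : ∀ u : E, ∃ ℓ, u ∈ B ℓ)
    (p : E → ℝ) (hp0 : ∀ u, 0 ≤ p u) (hp1 : ∀ u, p u ≤ 1)
    (hpsum : ∀ ℓ, ∑ u ∈ B ℓ, p u = 1)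
    (f : Finset E → ℝ)
    (hsub : SubmodularFn f) :
    ∑ X : Finset E, f X * (∏ u ∈ X, p u) * ∏ u ∈ Xᶜ, (1 - p u)
      ≤ ∑ c ∈ Fintype.piFinset B, (∏ ℓ, p (c ℓ)) * f (Finset.univ.image c) := by
  have hcover : univ.biUnion B = univ := eq_univ_of_forall fun u => by simpa using hBcover u
  calc ∑ X : Finset E, f X * (∏ u ∈ X, p u) * ∏ u ∈ Xᶜ, (1 - p u)
      = indepExp p (univ.biUnion B) f := by
        rw [hcover, indepExp, powerset_univ]
        exact sum_congr rfl fun X _ => by rw [indepProb, compl_eq_univ_sdiff]; ring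
    _ ≤ blockExp B p univ f := indepExp_biUnion_le_blockExp hBdisj hp0 hp1 hpsum univ hsub

/-- Let `E` be a finite set partitioned into disjoint nonempty blocks
`B ℓ`, `ℓ : ι`, with probabilities `p u` summing to `1` inside each block.  Let `π` be the
distribution that, independently for each block, includes exactly one element of the block
chosen according to `p` (i.e. the pushforward under `c ↦ image c univ` of the product of the
block distributions), and let `π̂` include each `u ∈ E` independently with probability `p u`.
Then for every nonnegative monotone submodular `f`, `E_{X∼π}[f X] ≥ E_{X∼π̂}[f X]`. -/
theorem expectation_one_per_block_ge_independent
    {E ι : Type*} [Fintype E] [DecidableEq E] [Fintype ι] [DecidableEq ι]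
    (B : ι → Finset E)
    (hBne : ∀ ℓ, (B ℓ).Nonempty)
    (hBdisj : ∀ ℓ ℓ', ℓ ≠ ℓ' → Disjoint (B ℓ) (B ℓ'))
    (hBcover : ∀ u : E, ∃ ℓ, u ∈ B ℓ)
    (p : E → ℝ) (hp0 : ∀ u, 0 ≤ p u) (hp1 : ∀ u, p u ≤ 1)
    (hpsum : ∀ ℓ, ∑ u ∈ B ℓ, p u = 1)
    (f : Finset E → ℝ) (hf0 : ∀ X, 0 ≤ f X)
    (hmono : MonotoneFn f) (hsub : SubmodularFn f) :
    ∑ X : Finset E, f X * (∏ u ∈ X, p u) * ∏ u ∈ Xᶜ, (1 - p u)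
      ≤ ∑ c ∈ Fintype.piFinset B, (∏ ℓ, p (c ℓ)) * f (Finset.univ.image c) :=
  expectation_one_per_block_ge_independent_general B hBdisj hBcover p hp0 hp1 hpsum f hsub
end

section
/- Let E be a finite set partitioned into disjoint nonempty blocks E = E_1 ∪ … ∪ E_k, and let p_u ∈ [0,1] for each u ∈ E satisfy Σ_{u ∈ E_ℓ} p_u = 1 for every ℓ. Let π be the distribution on subsets of E that, independently for each block ℓ, includes exactly one element of E_ℓ chosen with probabilities (p_u)_{u ∈ E_ℓ}. Then π satisfies weak negative regression: for every u ∈ E with 0 < p_u < 1 and every monotone set function g : 2^E → ℝ, it holds that E_{X∼π}[g(X ∖ {u}) | u ∈ X] ≤ E_{X∼π}[g(X ∖ {u}) | u ∉ X]. -/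
open Finset

/-- Let `E` be a finite set partitioned into disjoint nonempty blocks
`B ℓ` with probabilities `p u` summing to `1` inside each block, and let `π` be the
distribution over subsets of `E` that, independently for each block, includes exactly one
element of the block chosen according to `p` (i.e. the pushforward under
`c ↦ image c univ` of the product distribution with weights `∏ ℓ, p (c ℓ)`).  Then `π`
satisfies weak negative regression: for every `u` with `0 < p u < 1` and every monotone
set function `g`, `E_{X∼π}[g (X \ {u}) ∣ u ∈ X] ≤ E_{X∼π}[g (X \ {u}) ∣ u ∉ X]`,
conditional expectations being the usual ratios of finite sums. -/
theorem one_per_block_weak_negative_regression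
    {E ι : Type*} [Fintype E] [DecidableEq E] [Fintype ι] [DecidableEq ι]
    (B : ι → Finset E)
    (hBne : ∀ ℓ, (B ℓ).Nonempty)
    (hBdisj : ∀ ℓ ℓ', ℓ ≠ ℓ' → Disjoint (B ℓ) (B ℓ'))
    (hBcover : ∀ u : E, ∃ ℓ, u ∈ B ℓ)
    (p : E → ℝ) (hp0 : ∀ u, 0 ≤ p u) (hp1 : ∀ u, p u ≤ 1)
    (hpsum : ∀ ℓ, ∑ u ∈ B ℓ, p u = 1)
    (g : Finset E → ℝ) (hgmono : ∀ ⦃X Y : Finset E⦄, X ⊆ Y → g X ≤ g Y)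
    (u : E) (hu0 : 0 < p u) (hu1 : p u < 1) :
    (∑ c ∈ (Fintype.piFinset B).filter (fun c => u ∈ Finset.univ.image c),
        (∏ ℓ, p (c ℓ)) * g ((Finset.univ.image c).erase u)) /
      (∑ c ∈ (Fintype.piFinset B).filter (fun c => u ∈ Finset.univ.image c),
        ∏ ℓ, p (c ℓ))
    ≤ (∑ c ∈ (Fintype.piFinset B).filter (fun c => u ∉ Finset.univ.image c),
        (∏ ℓ, p (c ℓ)) * g ((Finset.univ.image c).erase u)) /
      (∑ c ∈ (Fintype.piFinset B).filter (fun c => u ∉ Finset.univ.image c),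
        ∏ ℓ, p (c ℓ)) := by
  classical
  obtain ⟨ℓ₀, huℓ⟩ := hBcover u
  -- characterization of membership
  have hchar : ∀ c : ι → E, (∀ ℓ, c ℓ ∈ B ℓ) → (u ∈ Finset.univ.image c ↔ c ℓ₀ = u) := by
    intro c hc
    constructor
    · intro h
      obtain ⟨ℓ, -, hℓ⟩ := Finset.mem_image.mp h
      by_cases hℓ0 : ℓ = ℓ₀
      · rw [← hℓ0]; exact hℓ
      · exact absurd huℓ (Finset.disjoint_left.mp (hBdisj ℓ ℓ₀ hℓ0) (hℓ ▸ hc ℓ))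
    · intro h; exact Finset.mem_image.mpr ⟨ℓ₀, Finset.mem_univ _, h⟩
  set B1 : ι → Finset E := fun ℓ => if ℓ = ℓ₀ then {u} else B ℓ with hB1
  set B2 : ι → Finset E := fun ℓ => if ℓ = ℓ₀ then (B ℓ₀).erase u else B ℓ with hB2
  have hf1 : (Fintype.piFinset B).filter (fun c => u ∈ Finset.univ.image c)
      = Fintype.piFinset B1 := by
    ext c
    simp only [Finset.mem_filter, Fintype.mem_piFinset, hB1]
    constructor
    · rintro ⟨hc, hmem⟩ ℓ
      by_cases h : ℓ = ℓ₀
      · subst h; simp [(hchar c hc).mp hmem]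
      · simp [h, hc ℓ]
    · intro hc
      have hc0 : c ℓ₀ = u := by have := hc ℓ₀; simpa using this
      have hc' : ∀ ℓ, c ℓ ∈ B ℓ := by
        intro ℓ
        by_cases h : ℓ = ℓ₀
        · subst h; rw [hc0]; exact huℓ
        · have := hc ℓ; rwa [if_neg h] at this
      exact ⟨hc', (hchar c hc').mpr hc0⟩
  have hf2 : (Fintype.piFinset B).filter (fun c => u ∉ Finset.univ.image c)
      = Fintype.piFinset B2 := by
    ext c
    simp only [Finset.mem_filter, Fintype.mem_piFinset, hB2]
    constructor
    · rintro ⟨hc, hmem⟩ ℓ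
      by_cases h : ℓ = ℓ₀
      · subst h
        rw [if_pos rfl, Finset.mem_erase]
        exact ⟨fun hh => hmem ((hchar c hc).mpr hh), hc _⟩
      · rw [if_neg h]; exact hc ℓ
    · intro hc
      have hc0 := hc ℓ₀
      rw [if_pos rfl, Finset.mem_erase] at hc0
      have hc' : ∀ ℓ, c ℓ ∈ B ℓ := by
        intro ℓ
        by_cases h : ℓ = ℓ₀
        · subst h; exact hc0.2
        · have := hc ℓ; rwa [if_neg h] at this
      exact ⟨hc', fun hh => hc0.1 ((hchar c hc').mp hh)⟩
  -- denominators
  have hsum1 : ∀ ℓ, (∑ v ∈ B1 ℓ, p v) = if ℓ = ℓ₀ then p u else 1 := by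
    intro ℓ
    by_cases h : ℓ = ℓ₀
    · subst h; simp [hB1]
    · simp [hB1, h, hpsum ℓ]
  have hsum2 : ∀ ℓ, (∑ v ∈ B2 ℓ, p v) = if ℓ = ℓ₀ then 1 - p u else 1 := by
    intro ℓ
    by_cases h : ℓ = ℓ₀
    · subst h
      simp only [hB2, if_pos rfl]
      rw [Finset.sum_erase_eq_sub huℓ, hpsum ℓ]
      simp
    · simp [hB2, h, hpsum ℓ]
  have hD1 : (∑ c ∈ Fintype.piFinset B1, ∏ ℓ, p (c ℓ)) = p u := by
    rw [← Finset.prod_univ_sum, Finset.prod_congr rfl (fun ℓ _ => hsum1 ℓ)]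
    simp
  have hD2 : (∑ c ∈ Fintype.piFinset B2, ∏ ℓ, p (c ℓ)) = 1 - p u := by
    rw [← Finset.prod_univ_sum, Finset.prod_congr rfl (fun ℓ _ => hsum2 ℓ)]
    simp
  rw [hf1, hf2, hD1, hD2]
  rw [div_le_div_iff₀ hu0 (by linarith)]
  have hB1mem : ∀ c ∈ Fintype.piFinset B1, c ℓ₀ = u := by
    intro c hc
    rw [Fintype.mem_piFinset] at hc
    simpa [hB1] using hc ℓ₀
  have hbij : ∀ F : (ι → E) → ℝ,
      (∑ c ∈ Fintype.piFinset B2, F c)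
        = ∑ x ∈ (Fintype.piFinset B1) ×ˢ ((B ℓ₀).erase u),
            F (Function.update x.1 ℓ₀ x.2) := by
    intro F
    refine Finset.sum_nbij' (i := fun c => (Function.update c ℓ₀ u, c ℓ₀))
      (j := fun x => Function.update x.1 ℓ₀ x.2) ?_ ?_ ?_ ?_ ?_
    · intro c hc
      rw [Fintype.mem_piFinset] at hc
      rw [Finset.mem_product]
      constructor
      · rw [Fintype.mem_piFinset]
        intro ℓ
        dsimp only
        by_cases h : ℓ = ℓ₀
        · subst h; rw [Function.update_self]; simp [hB1]
        · rw [Function.update_of_ne h]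
          have := hc ℓ; simp only [hB2, if_neg h] at this
          simpa [hB1, h] using this
      · have := hc ℓ₀; simp only [hB2, if_pos rfl] at this; exact this
    · intro x hx
      rw [Finset.mem_product] at hx
      rw [Fintype.mem_piFinset]
      intro ℓ
      by_cases h : ℓ = ℓ₀
      · subst h; rw [Function.update_self]; simpa [hB2] using hx.2
      · rw [Function.update_of_ne h]
        have := (Fintype.mem_piFinset.mp hx.1) ℓ
        simp only [hB1, if_neg h] at this
        simpa [hB2, h] using this
    · intro c hc
      dsimp only
      rw [Function.update_idem, Function.update_eq_self]
    · intro x hx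
      rw [Finset.mem_product] at hx
      have hx0 := hB1mem x.1 hx.1
      refine Prod.ext ?_ ?_
      · dsimp only
        rw [Function.update_idem, ← hx0, Function.update_eq_self]
      · dsimp only
        rw [Function.update_self]
    · intro c hc
      dsimp only
      rw [Function.update_idem, Function.update_eq_self]
  have h1mp : (1 : ℝ) - p u = ∑ v ∈ (B ℓ₀).erase u, p v := by
    rw [Finset.sum_erase_eq_sub huℓ, hpsum ℓ₀]
  have hL : (∑ c ∈ Fintype.piFinset B1,
        (∏ ℓ, p (c ℓ)) * g ((Finset.univ.image c).erase u)) * (1 - p u)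
      = ∑ x ∈ (Fintype.piFinset B1) ×ˢ ((B ℓ₀).erase u),
          ((∏ ℓ, p (x.1 ℓ)) * g ((Finset.univ.image x.1).erase u)) * p x.2 := by
    rw [h1mp, Finset.sum_mul_sum, ← Finset.sum_product']
  have hR : (∑ c ∈ Fintype.piFinset B2,
        (∏ ℓ, p (c ℓ)) * g ((Finset.univ.image c).erase u)) * p u
      = ∑ x ∈ (Fintype.piFinset B1) ×ˢ ((B ℓ₀).erase u),
          ((∏ ℓ, p (Function.update x.1 ℓ₀ x.2 ℓ))
            * g ((Finset.univ.image (Function.update x.1 ℓ₀ x.2)).erase u)) * p u := by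
    rw [hbij (fun c => (∏ ℓ, p (c ℓ)) * g ((Finset.univ.image c).erase u)),
      Finset.sum_mul]
  rw [hL, hR]
  apply Finset.sum_le_sum
  rintro ⟨c, v⟩ hx
  rw [Finset.mem_product] at hx
  obtain ⟨hc, hv⟩ := hx
  have hc0 : c ℓ₀ = u := hB1mem c hc
  have hsub : ((Finset.univ.image c).erase u)
      ⊆ ((Finset.univ.image (Function.update c ℓ₀ v)).erase u) := by
    intro x hxx
    rw [Finset.mem_erase] at hxx ⊢
    obtain ⟨hxu, hxim⟩ := hxx
    refine ⟨hxu, ?_⟩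
    obtain ⟨ℓ, -, hℓ⟩ := Finset.mem_image.mp hxim
    have hℓne : ℓ ≠ ℓ₀ := by rintro rfl; exact hxu (hℓ ▸ hc0 ▸ rfl)
    exact Finset.mem_image.mpr ⟨ℓ, Finset.mem_univ _,
      by rw [Function.update_of_ne hℓne]; exact hℓ⟩
  have hR0 : (0:ℝ) ≤ ∏ ℓ ∈ Finset.univ.erase ℓ₀, p (c ℓ) :=
    Finset.prod_nonneg fun ℓ _ => hp0 _
  have hprod1 : (∏ ℓ, p (c ℓ)) = p u * ∏ ℓ ∈ Finset.univ.erase ℓ₀, p (c ℓ) := by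
    rw [← Finset.mul_prod_erase Finset.univ _ (Finset.mem_univ ℓ₀), hc0]
  have hprod2 : (∏ ℓ, p (Function.update c ℓ₀ v ℓ))
      = p v * ∏ ℓ ∈ Finset.univ.erase ℓ₀, p (c ℓ) := by
    rw [← Finset.mul_prod_erase Finset.univ _ (Finset.mem_univ ℓ₀),
      Function.update_self]
    congr 1
    apply Finset.prod_congr rfl
    intro ℓ hℓ
    rw [Function.update_of_ne (Finset.mem_erase.mp hℓ).1]
  dsimp only
  calc (∏ ℓ, p (c ℓ)) * g ((Finset.univ.image c).erase u) * p v
      = (p u * p v * ∏ ℓ ∈ Finset.univ.erase ℓ₀, p (c ℓ))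
          * g ((Finset.univ.image c).erase u) := by rw [hprod1]; ring
    _ ≤ (p u * p v * ∏ ℓ ∈ Finset.univ.erase ℓ₀, p (c ℓ))
          * g ((Finset.univ.image (Function.update c ℓ₀ v)).erase u) := by
        apply mul_le_mul_of_nonneg_left (hgmono hsub)
        have hv0 := hp0 v
        positivity
    _ = (∏ ℓ, p (Function.update c ℓ₀ v ℓ))
          * g ((Finset.univ.image (Function.update c ℓ₀ v)).erase u) * p u := by
        rw [hprod2]; ring
end

section
/- Let E be a finite set, f : 2^E → ℝ a submodular set function, and F : [0,1]^E → ℝ its multilinear extension. Then for every x ∈ [0,1]^E the function g : [0,1] → ℝ defined by g(t) = F(t·x) is concave. -/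
open Finset

/-- The multilinear extension of a set function `f`:
`F x = ∑_{X ⊆ E} f X · ∏_{u ∈ X} x u · ∏_{u ∉ X} (1 − x u)`. -/
noncomputable def mlext {α : Type*} [Fintype α] [DecidableEq α]
    (f : Finset α → ℝ) (x : α → ℝ) : ℝ :=
  ∑ X : Finset α, f X * (∏ u ∈ X, x u) * ∏ u ∈ Xᶜ, (1 - x u)

/-- Submodularity implies the classical union/intersection inequality (auxiliary step). -/
lemma submod_aux {α : Type*} [DecidableEq α] {f : Finset α → ℝ} (hsub : SubmodularFn f)
    (S : Finset α) : ∀ (A B : Finset α), A ⊆ B → Disjoint (S : Set α) B →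
    f (B ∪ S) - f B ≤ f (A ∪ S) - f A := by
  classical
  induction S using Finset.induction_on with
  | empty => simp
  | @insert u S hu ih =>
    intro A B hAB hdisj
    have hd' : Disjoint (S : Set α) (B : Set α) := by
      refine Set.disjoint_of_subset_left ?_ hdisj
      simp [Finset.coe_insert, Set.subset_insert]
    have huB : u ∉ B := by
      have := Set.disjoint_left.1 hdisj (show u ∈ ((insert u S : Finset α) : Set α) by simp)
      simpa using this
    have huBS : u ∉ B ∪ S := by simp [huB, hu]
    have h1 : f (insert u (B ∪ S)) - f (B ∪ S) ≤ f (insert u (A ∪ S)) - f (A ∪ S) :=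
      hsub (Finset.union_subset_union hAB (le_refl S)) u huBS
    have h2 : f (B ∪ S) - f B ≤ f (A ∪ S) - f A := ih A B hAB hd'
    have e1 : B ∪ insert u S = insert u (B ∪ S) := by
      ext a; simp [or_comm, or_left_comm]
    have e2 : A ∪ insert u S = insert u (A ∪ S) := by
      ext a; simp [or_comm, or_left_comm]
    rw [e1, e2]; linarith

/-- Submodular set functions satisfy `f (X ∪ Y) + f (X ∩ Y) ≤ f X + f Y`. -/
lemma submod_union_inter {α : Type*} [DecidableEq α] {f : Finset α → ℝ} (hsub : SubmodularFn f)
    (X Y : Finset α) : f (X ∪ Y) + f (X ∩ Y) ≤ f X + f Y := by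
  have h := submod_aux hsub (X \ Y) (X ∩ Y) Y (Finset.inter_subset_right) ?_
  · have e1 : Y ∪ X \ Y = X ∪ Y := by ext a; by_cases h : a ∈ Y <;> simp [h, or_comm]
    have e2 : X ∩ Y ∪ X \ Y = X := by ext a; by_cases h : a ∈ Y <;> simp [h]
    rw [e1, e2] at h; linarith
  · rw [Finset.disjoint_coe]; exact Finset.sdiff_disjoint

/-- Expansion of a sum over `4`-state configurations grouped by the induced subset. -/
lemma master {E : Type*} [Fintype E] [DecidableEq E] (f : Finset E → ℝ)
    (p : E → Fin 4 → ℝ) (S : Finset (Fin 4)) :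
    ∑ σ : E → Fin 4, (∏ u, p u (σ u)) * f (univ.filter fun u => σ u ∈ S)
      = ∑ A : Finset E, f A * (∏ u ∈ A, ∑ i ∈ S, p u i) * ∏ u ∈ Aᶜ, ∑ i ∈ Sᶜ, p u i := by
  classical
  rw [← Finset.sum_fiberwise_of_maps_to (g := fun σ : E → Fin 4 => univ.filter fun u => σ u ∈ S)
      (t := univ) (fun σ _ => Finset.mem_univ _)
      (fun σ => (∏ u, p u (σ u)) * f (univ.filter fun u => σ u ∈ S))]
  refine Finset.sum_congr rfl fun A _ => ?_
  have h1 : ∀ σ ∈ univ.filter (fun σ : E → Fin 4 => (univ.filter fun u => σ u ∈ S) = A),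
      (∏ u, p u (σ u)) * f (univ.filter fun u => σ u ∈ S) = (∏ u, p u (σ u)) * f A := by
    intro σ hσ; rw [(Finset.mem_filter.1 hσ).2]
  rw [Finset.sum_congr rfl h1, ← Finset.sum_mul]
  have hfib : univ.filter (fun σ : E → Fin 4 => (univ.filter fun u => σ u ∈ S) = A)
      = Fintype.piFinset (fun u => if u ∈ A then S else Sᶜ) := by
    ext σ
    simp only [Finset.mem_filter, Finset.mem_univ, true_and, Fintype.mem_piFinset,
      Finset.ext_iff]
    constructor
    · intro h u
      have := h u
      by_cases hA : u ∈ A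
      · rw [if_pos hA]; tauto
      · rw [if_neg hA, Finset.mem_compl]; tauto
    · intro h u
      have := h u
      by_cases hA : u ∈ A
      · rw [if_pos hA] at this; tauto
      · rw [if_neg hA, Finset.mem_compl] at this; tauto
  rw [hfib, ← Finset.prod_univ_sum]
  rw [mul_comm, mul_assoc]
  congr 1
  rw [← Finset.prod_mul_prod_compl A (fun u => ∑ i ∈ (if u ∈ A then S else Sᶜ), p u i)]
  congr 1
  · exact Finset.prod_congr rfl fun u hu => by rw [if_pos hu]
  · exact Finset.prod_congr rfl fun u hu => by rw [if_neg (Finset.mem_compl.1 hu)]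

/-- Per-element weights of the four states used in the midpoint coupling. -/
noncomputable def pw (a b : ℝ) {E : Type*} (x : E → ℝ) (u : E) : Fin 4 → ℝ :=
  ![a * x u, (b - a) * x u / 2, (b - a) * x u / 2, 1 - b * x u]

/-- Midpoint concavity of the multilinear extension along a ray. -/
lemma key_midpoint {E : Type*} [Fintype E] [DecidableEq E]
    (f : Finset E → ℝ) (hsub : SubmodularFn f)
    (x : E → ℝ) (hx0 : ∀ u, 0 ≤ x u) (hx1 : ∀ u, x u ≤ 1)
    {a b : ℝ} (ha0 : 0 ≤ a) (hab : a ≤ b) (hb1 : b ≤ 1) :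
    mlext f (fun u => a * x u) + mlext f (fun u => b * x u)
      ≤ 2 * mlext f (fun u => (a + b) / 2 * x u) := by
  classical
  set p : E → Fin 4 → ℝ := pw a b x with hp_def
  set M : Finset (Fin 4) → ℝ :=
    fun S => ∑ σ : E → Fin 4, (∏ u, p u (σ u)) * f (univ.filter fun u => σ u ∈ S) with hM_def
  have hsum : ∀ (S : Finset (Fin 4)) u, ∑ i ∈ S, p u i
      = ∑ i : Fin 4, if i ∈ S then p u i else 0 := by
    intro S u; rw [Finset.sum_ite_mem, Finset.univ_inter]
  have rep : ∀ (S : Finset (Fin 4)) (c : ℝ), (∀ u, ∑ i ∈ S, p u i = c * x u) →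
      (∀ u, ∑ i ∈ Sᶜ, p u i = 1 - c * x u) → mlext f (fun u => c * x u) = M S := by
    intro S c h1 h2
    simp only [hM_def]
    rw [master f p S, mlext]
    refine Finset.sum_congr rfl fun A _ => ?_
    rw [Finset.prod_congr rfl (fun u _ => (h1 u).symm),
      Finset.prod_congr rfl (fun u _ => (h2 u).symm)]
  have ha : mlext f (fun u => a * x u) = M {0} := by
    refine rep {0} a (fun u => ?_) (fun u => ?_)
    · rw [hsum]; simp [hp_def, pw, Fin.sum_univ_four]
    · rw [hsum]; simp [hp_def, pw, Fin.sum_univ_four]; ring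
  have hb : mlext f (fun u => b * x u) = M {0,1,2} := by
    refine rep {0,1,2} b (fun u => ?_) (fun u => ?_)
    · rw [hsum]; simp [hp_def, pw, Fin.sum_univ_four]; ring
    · rw [hsum]; simp [hp_def, pw, Fin.sum_univ_four]
  have ht1 : mlext f (fun u => (a + b) / 2 * x u) = M {0,1} := by
    refine rep {0,1} ((a + b) / 2) (fun u => ?_) (fun u => ?_)
    · rw [hsum]; simp [hp_def, pw, Fin.sum_univ_four]; ring
    · rw [hsum]; simp [hp_def, pw, Fin.sum_univ_four]; ring
  have ht2 : mlext f (fun u => (a + b) / 2 * x u) = M {0,2} := by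
    refine rep {0,2} ((a + b) / 2) (fun u => ?_) (fun u => ?_)
    · rw [hsum]; simp [hp_def, pw, Fin.sum_univ_four]; ring
    · rw [hsum]; simp [hp_def, pw, Fin.sum_univ_four]; ring
  have hpnn : ∀ u i, 0 ≤ p u i := by
    intro u i
    have h1 := hx0 u; have h2 := hx1 u
    fin_cases i <;> simp [hp_def, pw] <;> nlinarith
  have hineq : M {0} + M {0,1,2} ≤ M {0,1} + M {0,2} := by
    rw [hM_def]
    simp only
    rw [← Finset.sum_add_distrib, ← Finset.sum_add_distrib]
    refine Finset.sum_le_sum fun σ _ => ?_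
    rw [← mul_add, ← mul_add]
    refine mul_le_mul_of_nonneg_left ?_ (Finset.prod_nonneg fun u _ => hpnn u (σ u))
    have hor : ∀ i : Fin 4, (i ∈ ({0,1} : Finset (Fin 4)) ∨ i ∈ ({0,2} : Finset (Fin 4)))
        ↔ i ∈ ({0,1,2} : Finset (Fin 4)) := by decide
    have hand : ∀ i : Fin 4, (i ∈ ({0,1} : Finset (Fin 4)) ∧ i ∈ ({0,2} : Finset (Fin 4)))
        ↔ i ∈ ({0} : Finset (Fin 4)) := by decide
    have hU : (univ.filter fun u => σ u ∈ ({0,1} : Finset (Fin 4)))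
        ∪ (univ.filter fun u => σ u ∈ ({0,2} : Finset (Fin 4)))
        = univ.filter fun u => σ u ∈ ({0,1,2} : Finset (Fin 4)) := by
      rw [← Finset.filter_or]
      exact Finset.filter_congr fun u _ => hor (σ u)
    have hI : (univ.filter fun u => σ u ∈ ({0,1} : Finset (Fin 4)))
        ∩ (univ.filter fun u => σ u ∈ ({0,2} : Finset (Fin 4)))
        = univ.filter fun u => σ u ∈ ({0} : Finset (Fin 4)) := by
      rw [← Finset.filter_and]
      exact Finset.filter_congr fun u _ => hand (σ u)
    have := submod_union_inter hsub (univ.filter fun u => σ u ∈ ({0,1} : Finset (Fin 4)))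
      (univ.filter fun u => σ u ∈ ({0,2} : Finset (Fin 4)))
    rw [hU, hI] at this
    linarith
  rw [ha, hb, two_mul]
  nth_rewrite 1 [ht1]
  nth_rewrite 1 [ht2]
  exact hineq

/-- A continuous midpoint-concave function on `[0,1]` is concave. -/
lemma concaveOn_of_midpoint (g : ℝ → ℝ) (hc : ContinuousOn g (Set.Icc 0 1))
    (hm : ∀ a ∈ Set.Icc (0:ℝ) 1, ∀ b ∈ Set.Icc (0:ℝ) 1, g a + g b ≤ 2 * g ((a + b) / 2)) :
    ConcaveOn ℝ (Set.Icc (0:ℝ) 1) g := by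
  refine ⟨convex_Icc 0 1, ?_⟩
  intro y hy z hz α β hα hβ hαβ
  have hβ' : β = 1 - α := by linarith
  set m : ℝ → ℝ := fun l => l * y + (1 - l) * z with hm_def
  have hmem : ∀ l ∈ Set.Icc (0:ℝ) 1, m l ∈ Set.Icc (0:ℝ) 1 := by
    intro l hl
    have := (convex_Icc (0:ℝ) 1) hy hz hl.1 (by linarith [hl.2] : (0:ℝ) ≤ 1 - l) (by ring)
    simpa [hm_def, smul_eq_mul] using this
  set S : Set ℝ := {l | l ∈ Set.Icc (0:ℝ) 1 ∧ l * g y + (1 - l) * g z ≤ g (m l)} with hS_def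
  have hScl : IsClosed S := by
    have hF : ContinuousOn (fun l => g (m l) - (l * g y + (1 - l) * g z)) (Set.Icc 0 1) := by
      apply ContinuousOn.sub
      · exact hc.comp (Continuous.continuousOn (by continuity)) hmem
      · exact Continuous.continuousOn (by continuity)
    have : S = Set.Icc (0:ℝ) 1 ∩ (fun l => g (m l) - (l * g y + (1 - l) * g z)) ⁻¹' Set.Ici 0 := by
      ext l; simp only [hS_def, Set.mem_setOf_eq, Set.mem_inter_iff, Set.mem_preimage,
        Set.mem_Ici, sub_nonneg]
    rw [this]
    exact hF.preimage_isClosed_of_isClosed isClosed_Icc isClosed_Ici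
  have h0 : (0:ℝ) ∈ S := by
    constructor
    · exact ⟨le_refl _, zero_le_one⟩
    · simp [hm_def]
  have h1 : (1:ℝ) ∈ S := by
    constructor
    · exact ⟨zero_le_one, le_refl _⟩
    · simp [hm_def]
  have hmid : ∀ l ∈ S, ∀ l' ∈ S, (l + l') / 2 ∈ S := by
    intro l hl l' hl'
    obtain ⟨hl1, hl2⟩ := hl
    obtain ⟨hl1', hl2'⟩ := hl'
    refine ⟨⟨by linarith [hl1.1, hl1'.1], by linarith [hl1.2, hl1'.2]⟩, ?_⟩
    have key := hm (m l) (hmem l hl1) (m l') (hmem l' hl1')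
    have e : (m l + m l') / 2 = m ((l + l') / 2) := by simp only [hm_def]; ring
    rw [e] at key
    have : ((l + l') / 2) * g y + (1 - (l + l') / 2) * g z
        = ((l * g y + (1 - l) * g z) + (l' * g y + (1 - l') * g z)) / 2 := by ring
    rw [this]
    linarith
  have hdy : ∀ n : ℕ, ∀ k : ℕ, k ≤ 2 ^ n → ((k : ℝ) / 2 ^ n) ∈ S := by
    intro n
    induction n with
    | zero =>
      intro k hk
      interval_cases k
      · simpa using h0
      · simpa using h1
    | succ n ih =>
      intro k hk
      have hk1 : (k + 1) / 2 ≤ 2 ^ n := by omega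
      have hk2 : k / 2 ≤ 2 ^ n := by omega
      have hsum : (k + 1) / 2 + k / 2 = k := by omega
      have := hmid _ (ih _ hk1) _ (ih _ hk2)
      have e : (((((k+1)/2 : ℕ) : ℝ) / 2 ^ n) + (((k/2 : ℕ) : ℝ) / 2 ^ n)) / 2
          = (k : ℝ) / 2 ^ (n + 1) := by
        have h2 : (k : ℝ) = ((((k+1)/2 : ℕ) : ℝ)) + (((k/2 : ℕ) : ℝ)) := by
          rw [← Nat.cast_add, hsum]
        rw [h2, pow_succ]
        ring
      rwa [e] at this
  have hall : ∀ l ∈ Set.Icc (0:ℝ) 1, l ∈ S := by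
    intro l hl
    set u : ℕ → ℝ := fun n => ((⌊l * 2 ^ n⌋₊ : ℝ) / 2 ^ n) with hu_def
    have humem : ∀ n, u n ∈ S := by
      intro n
      apply hdy n
      have : l * 2 ^ n ≤ ((2 ^ n : ℕ) : ℝ) := by
        push_cast
        nlinarith [hl.2, (by positivity : (0:ℝ) < (2:ℝ)^n)]
      calc ⌊l * 2 ^ n⌋₊ ≤ ⌊((2 ^ n : ℕ) : ℝ)⌋₊ := Nat.floor_le_floor this
        _ = 2 ^ n := Nat.floor_natCast _
    have htend : Filter.Tendsto u Filter.atTop (nhds l) := by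
      have hub : ∀ n, u n ≤ l := by
        intro n
        have hpos : (0:ℝ) < 2 ^ n := by positivity
        have : (⌊l * 2 ^ n⌋₊ : ℝ) ≤ l * 2 ^ n := Nat.floor_le (by nlinarith [hl.1])
        rw [hu_def]
        exact (div_le_iff₀ hpos).2 (by linarith)
      have hlb : ∀ n, l - (1/2) ^ n ≤ u n := by
        intro n
        have hpos : (0:ℝ) < 2 ^ n := by positivity
        have : l * 2 ^ n - 1 < (⌊l * 2 ^ n⌋₊ : ℝ) := by
          linarith [Nat.sub_one_lt_floor (l * 2 ^ n)]
        rw [hu_def]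
        rw [le_div_iff₀ hpos]
        have e : (l - (1/2) ^ n) * 2 ^ n = l * 2 ^ n - 1 := by
          rw [sub_mul]
          congr 1
          rw [← mul_pow]
          norm_num
        linarith
      have h1t : Filter.Tendsto (fun n : ℕ => l - (1/2) ^ n) Filter.atTop (nhds l) := by
        have : Filter.Tendsto (fun n : ℕ => ((1:ℝ)/2) ^ n) Filter.atTop (nhds 0) :=
          tendsto_pow_atTop_nhds_zero_of_lt_one (by norm_num) (by norm_num)
        simpa using Filter.Tendsto.sub (tendsto_const_nhds (x := l)) this
      exact tendsto_of_tendsto_of_tendsto_of_le_of_le h1t tendsto_const_nhds hlb hub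
    exact hScl.mem_of_tendsto htend (Filter.Eventually.of_forall humem)
  have := (hall α ⟨hα, by linarith⟩).2
  rw [hβ']
  simpa [hm_def, smul_eq_mul] using this

/-- If `f` is submodular with multilinear extension `F`, then for every
`x ∈ [0,1]^E` the function `g : [0,1] → ℝ`, `g t = F (t • x)`, is concave. -/
theorem mlext_concaveOn_ray
    {E : Type*} [Fintype E] [DecidableEq E]
    (f : Finset E → ℝ) (hsub : SubmodularFn f)
    (x : E → ℝ) (hx0 : ∀ u, 0 ≤ x u) (hx1 : ∀ u, x u ≤ 1) :
    ConcaveOn ℝ (Set.Icc (0 : ℝ) 1) (fun t => mlext f (fun u => t * x u)) := by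
  apply concaveOn_of_midpoint
  · apply Continuous.continuousOn
    unfold mlext
    apply continuous_finset_sum
    intro X _
    apply Continuous.mul
    · apply Continuous.mul continuous_const
      exact continuous_finset_prod _ fun u _ => by continuity
    · exact continuous_finset_prod _ fun u _ => by continuity
  · intro a ha b hb
    rcases le_total a b with h | h
    · exact key_midpoint f hsub x hx0 hx1 ha.1 h hb.2
    · have := key_midpoint f hsub x hx0 hx1 hb.1 h ha.2
      rw [show (b + a) / 2 = (a + b) / 2 by ring] at this
      linarith
end

section
/- Let E be a finite set, f : 2^E → ℝ≥0 a nonnegative submodular set function, and F : [0,1]^E → ℝ its multilinear extension. Then for every x ∈ [0,1]^E and every real k ≥ 1 it holds that F(x) ≤ k · F(x/k). -/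
open Finset

/-!
Scaling `x` by `p ≤ 1` thins the random set underlying the multilinear extension:
`F (p • x)` is the multilinear extension of `sampleMean f p`. Induction on `X`, using
submodularity and `0 ≤ f ∅`, gives `p * f X ≤ sampleMean f p X`; for `p = 1 / k` this yields
`F x ≤ k * F (x / k)` termwise.
-/

section SampleMean

variable {α : Type*} [DecidableEq α]

/-- The expected value of `f` on a random subset of `X` that keeps each element
independently with probability `p`. -/
noncomputable def sampleMean (f : Finset α → ℝ) (p : ℝ) (X : Finset α) : ℝ :=
  ∑ S ∈ X.powerset, p ^ #S * (1 - p) ^ #(X \ S) * f S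

@[simp]
theorem sampleMean_empty (f : Finset α → ℝ) (p : ℝ) : sampleMean f p ∅ = f ∅ := by
  simp [sampleMean]

theorem sampleMean_add_const (f : Finset α → ℝ) (p c : ℝ) (X : Finset α) :
    sampleMean (fun S => f S + c) p X = sampleMean f p X + c := by
  have hweights : ∑ S ∈ X.powerset, p ^ #S * (1 - p) ^ #(X \ S) = 1 := by
    have h := sum_pow_mul_eq_add_pow p (1 - p) X
    rw [add_sub_cancel, one_pow] at h
    refine Eq.trans (sum_congr rfl fun S hS => ?_) h
    rw [card_sdiff_of_subset (mem_powerset.1 hS)]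
  simp only [sampleMean, mul_add, sum_add_distrib, ← sum_mul, hweights, one_mul]

theorem sampleMean_mono {f g : Finset α → ℝ} {p : ℝ} (hp0 : 0 ≤ p) (hp1 : p ≤ 1)
    {X : Finset α} (hfg : ∀ S ⊆ X, f S ≤ g S) : sampleMean f p X ≤ sampleMean g p X := by
  refine sum_le_sum fun S hS => mul_le_mul_of_nonneg_left (hfg S (mem_powerset.1 hS)) ?_
  exact mul_nonneg (pow_nonneg hp0 _) (pow_nonneg (sub_nonneg.2 hp1) _)

theorem sampleMean_insert (f : Finset α → ℝ) (p : ℝ) {a : α} {X : Finset α} (ha : a ∉ X) :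
    sampleMean f p (insert a X)
      = (1 - p) * sampleMean f p X + p * sampleMean (fun S => f (insert a S)) p X := by
  rw [sampleMean, sum_powerset_insert ha, sampleMean, sampleMean, mul_sum, mul_sum]
  congr 1 <;> refine sum_congr rfl fun S hS => ?_
  · have haS : a ∉ S := fun h => ha (mem_powerset.1 hS h)
    rw [insert_sdiff_of_notMem _ haS, card_insert_of_notMem (by simp [ha])]
    ring
  · have haS : a ∉ S := fun h => ha (mem_powerset.1 hS h)
    rw [insert_sdiff_insert, sdiff_insert_of_notMem ha, card_insert_of_notMem haS]
    ring

/-- Adding `a` to `X` raises the sample mean by at least `p` times the marginal gain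
`f (insert a X) - f X`, since by submodularity each sample `S ⊆ X` gains at least as much
from `a`. -/
theorem mul_le_sampleMean {f : Finset α → ℝ} (hf0 : 0 ≤ f ∅) (hsub : SubmodularFn f)
    {p : ℝ} (hp0 : 0 ≤ p) (hp1 : p ≤ 1) (X : Finset α) : p * f X ≤ sampleMean f p X := by
  induction X using Finset.induction_on with
  | empty => simpa using mul_le_of_le_one_left hf0 hp1
  | @insert a X ha ih =>
    have hgain : sampleMean f p X + (f (insert a X) - f X)
        ≤ sampleMean (fun S => f (insert a S)) p X := by
      rw [← sampleMean_add_const]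
      exact sampleMean_mono hp0 hp1 fun S hS => by linarith [hsub hS a ha]
    rw [sampleMean_insert f p ha]
    nlinarith [mul_le_mul_of_nonneg_left hgain hp0]

end SampleMean

section MultilinearExtension

variable {α : Type*} [Fintype α] [DecidableEq α]

theorem mlext_mono {f g : Finset α → ℝ} {x : α → ℝ} (hx0 : ∀ u, 0 ≤ x u) (hx1 : ∀ u, x u ≤ 1)
    (hfg : ∀ X, f X ≤ g X) : mlext f x ≤ mlext g x := by
  refine sum_le_sum fun X _ => ?_
  rw [mul_assoc, mul_assoc]
  exact mul_le_mul_of_nonneg_right (hfg X) <| mul_nonneg (prod_nonneg fun u _ => hx0 u)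
    (prod_nonneg fun u _ => sub_nonneg.2 (hx1 u))

theorem mlext_const_mul (c : ℝ) (f : Finset α → ℝ) (x : α → ℝ) :
    mlext (fun X => c * f X) x = c * mlext f x := by
  simp only [mlext, mul_sum, mul_assoc]

/-- Expanding `1 - p * x u = (1 - x u) + (1 - p) * x u` at every `u ∉ S`: the terms of the
product are indexed by the sets `X ⊇ S` of coordinates where the second summand is chosen. -/
theorem sum_superset_mul_weight (x : α → ℝ) (p : ℝ) (S : Finset α) :
    ∑ X with S ⊆ X, p ^ #S * (1 - p) ^ #(X \ S) * ((∏ u ∈ X, x u) * ∏ u ∈ Xᶜ, (1 - x u))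
      = (∏ u ∈ S, p * x u) * ∏ u ∈ Sᶜ, (1 - p * x u) := by
  set a : α → ℝ := fun u => x u * if u ∈ S then p else 1 - p
  set b : α → ℝ := fun u => if u ∈ S then 0 else 1 - x u
  have hrhs : ∏ u, (a u + b u) = (∏ u ∈ S, p * x u) * ∏ u ∈ Sᶜ, (1 - p * x u) := by
    calc ∏ u, (a u + b u) = ∏ u, if u ∈ S then p * x u else 1 - p * x u := by
          refine prod_congr rfl fun u _ => ?_
          by_cases hu : u ∈ S <;> simp only [a, b, hu, if_true, if_false] <;> ring
      _ = _ := by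
          rw [prod_ite, filter_mem_eq_inter, univ_inter, filter_notMem_eq_sdiff,
            ← compl_eq_univ_sdiff]
  rw [← hrhs, prod_add, powerset_univ, sum_filter]
  refine sum_congr rfl fun X _ => ?_
  split_ifs with hSX
  · have hXa : ∏ u ∈ X, a u = p ^ #S * (1 - p) ^ #(X \ S) * ∏ u ∈ X, x u := by
      rw [prod_mul_distrib, prod_ite, filter_mem_eq_inter, inter_eq_right.2 hSX,
        filter_notMem_eq_sdiff, prod_const, prod_const]
      ring
    have hXb : ∏ u ∈ univ \ X, b u = ∏ u ∈ Xᶜ, (1 - x u) := by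
      rw [← compl_eq_univ_sdiff]
      refine prod_congr rfl fun u hu => ?_
      simp only [b, if_neg fun h => mem_compl.1 hu (hSX h)]
    rw [hXa, hXb]
    ring
  · obtain ⟨u, huS, huX⟩ := not_subset.1 hSX
    rw [prod_eq_zero (s := univ \ X) (i := u) (by simpa using huX) (by simp [b, huS]), mul_zero]

/-- Drawing `X` with marginals `x` and then keeping each element of `X` with probability `p`
draws a set with marginals `p * x`. -/
theorem mlext_mul_eq_mlext_sampleMean (f : Finset α → ℝ) (p : ℝ) (x : α → ℝ) :
    mlext f (fun u => p * x u) = mlext (sampleMean f p) x := by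
  calc mlext f (fun u => p * x u)
      = ∑ S : Finset α, f S * ∑ X with S ⊆ X,
          p ^ #S * (1 - p) ^ #(X \ S) * ((∏ u ∈ X, x u) * ∏ u ∈ Xᶜ, (1 - x u)) := by
        refine sum_congr rfl fun S _ => ?_
        rw [sum_superset_mul_weight, mul_assoc]
    _ = ∑ X : Finset α, ∑ S : Finset α, if S ⊆ X then
          f S * (p ^ #S * (1 - p) ^ #(X \ S) * ((∏ u ∈ X, x u) * ∏ u ∈ Xᶜ, (1 - x u)))
          else 0 := by
        rw [sum_comm]
        simp only [mul_sum, sum_filter, mul_ite, mul_zero]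
    _ = mlext (sampleMean f p) x := by
        refine sum_congr rfl fun X _ => ?_
        rw [← sum_filter, filter_subset_univ, sampleMean, sum_mul, sum_mul]
        exact sum_congr rfl fun S _ => by ring

end MultilinearExtension

/-- If `f` is nonnegative and submodular with multilinear extension `F`,
then for every `x ∈ [0,1]^E` and every real `k ≥ 1`, `F x ≤ k · F (x / k)`. -/
theorem mlext_le_scale
    {E : Type*} [Fintype E] [DecidableEq E]
    (f : Finset E → ℝ) (hf0 : ∀ X, 0 ≤ f X) (hsub : SubmodularFn f)
    (x : E → ℝ) (hx0 : ∀ u, 0 ≤ x u) (hx1 : ∀ u, x u ≤ 1)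
    (k : ℝ) (hk : 1 ≤ k) :
    mlext f x ≤ k * mlext f (fun u => x u / k) := by
  have hk0 : 0 < k := zero_lt_one.trans_le hk
  have hsample : ∀ X, f X ≤ k * sampleMean f k⁻¹ X := fun X =>
    (inv_mul_le_iff₀ hk0).1 <|
      mul_le_sampleMean (hf0 ∅) hsub (inv_nonneg.2 hk0.le) (inv_le_one_of_one_le₀ hk) X
  calc mlext f x ≤ mlext (fun X => k * sampleMean f k⁻¹ X) x := mlext_mono hx0 hx1 hsample
    _ = k * mlext f (fun u => k⁻¹ * x u) := by
        rw [mlext_const_mul, mlext_mul_eq_mlext_sampleMean]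
    _ = k * mlext f (fun u => x u / k) := by simp only [inv_mul_eq_div]
end

section
/- Consider a Bayesian game with submodular social welfare in which the prior ρ is independent (a product distribution). Then STR ≥ (1 − 1/e) · OPT, i.e., max_{s ∈ S} E_{θ∼ρ}[SW(s(θ))] ≥ (1 − 1/e) · E_{θ∼ρ}[max_{a ∈ A^θ} SW(a)] (equivalently, the strategy representability gap is at least 1 − 1/e). -/
/-!
Fix an optimal action profile `A θ` for every type profile `θ`, draw independent type profiles
`T₁, …, Tₙ` from `ρ`, and let player `i` of type `t` play the `i`-th action of `A` at `Tᵢ` with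
its `i`-th entry replaced by `t`. For a product prior the profiles seen by the players are again
independent draws from `ρ`, so on average these strategies earn `E f {A(Tᵢ)ᵢ}`, and some
deterministic strategy profile earns at least as much.

It remains to prove the correlation gap `E f {A(Tᵢ)ᵢ} ≥ (1 - 1/e) OPT`. Let `F u` be the same
expectation when each coordinate is kept only with probability `u`. Adding coordinate `i`, whose
profile `Tᵢ` is independent of the kept ones, gains on average at least the marginal value of
`A θ i` for a fresh `θ`; by submodularity and monotonicity these gains add up to
`F' u ≥ OPT - F u`. So `eᵘ (F u - OPT)` is nondecreasing, and comparing `u = 0` with `u = 1`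
gives `F 1 ≥ (1 - 1/e) OPT`.
-/

open Finset

/-- `OPT = E_{θ∼ρ}[max_{a ∈ A^θ} SW a]`, where `SW a = f {a_1, …, a_n}`. -/
noncomputable def gOPT {n : ℕ} {Θ : Fin n → Type*} [∀ i, Fintype (Θ i)] [∀ i, DecidableEq (Θ i)]
    {E : Type*} [Fintype E] [DecidableEq E]
    (Act : ∀ i, Θ i → Finset E) (hAne : ∀ i t, (Act i t).Nonempty)
    (ρ : (∀ i, Θ i) → ℝ) (f : Finset E → ℝ) : ℝ :=
  ∑ θ : ∀ i, Θ i, ρ θ *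
    (Fintype.piFinset fun i => Act i (θ i)).sup'
      (Fintype.piFinset_nonempty.mpr fun i => hAne i (θ i))
      (fun a => f (Finset.univ.image a))

/-- `STR = max_{s ∈ S} E_{θ∼ρ}[SW (s θ)]`, the maximum over strategy profiles. -/
noncomputable def gSTR {n : ℕ} {Θ : Fin n → Type*} [∀ i, Fintype (Θ i)] [∀ i, DecidableEq (Θ i)]
    {E : Type*} [Fintype E] [DecidableEq E]
    (Act : ∀ i, Θ i → Finset E) (hAne : ∀ i t, (Act i t).Nonempty)
    (ρ : (∀ i, Θ i) → ℝ) (f : Finset E → ℝ) : ℝ :=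
  (Fintype.piFinset fun i => Fintype.piFinset fun t : Θ i => Act i t).sup'
    (Fintype.piFinset_nonempty.mpr fun i => Fintype.piFinset_nonempty.mpr fun t => hAne i t)
    (fun s => ∑ θ : ∀ i, Θ i, ρ θ * f (Finset.univ.image fun i => s i (θ i)))

section SetFunction

variable {E : Type*} [DecidableEq E] {f : Finset E → ℝ}

theorem SubmodularFn.insert_sub_le (hmono : MonotoneFn f) (hsub : SubmodularFn f)
    {X Y : Finset E} (hXY : X ⊆ Y) (e : E) :
    f (insert e Y) - f Y ≤ f (insert e X) - f X := by
  by_cases he : e ∈ Y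
  · rw [insert_eq_self.2 he, sub_self]
    exact sub_nonneg.2 (hmono (subset_insert e X))
  · exact hsub hXY e he

theorem SubmodularFn.sub_le_sum_insert_sub {ι : Type*} [DecidableEq ι] (hmono : MonotoneFn f)
    (hsub : SubmodularFn f) (X : Finset E) (a : ι → E) (s : Finset ι) :
    f (s.image a) - f X ≤ ∑ i ∈ s, (f (insert (a i) X) - f X) := by
  have telescope : f (X ∪ s.image a) - f X ≤ ∑ i ∈ s, (f (insert (a i) X) - f X) := by
    induction s using Finset.induction_on with
    | empty => simp
    | @insert j s hj ih =>
      rw [image_insert, union_insert, sum_insert hj]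
      linarith [hsub.insert_sub_le hmono (subset_union_left : X ⊆ X ∪ s.image a) (a j)]
  linarith [hmono (subset_union_right : s.image a ⊆ X ∪ s.image a)]

end SetFunction

section BernoulliExpect

variable {ι : Type*}

/-- The expectation of `g R` for a random `R ⊆ s` containing each element of `s`
independently with probability `t`. -/
noncomputable def bernoulliExpect (s : Finset ι) (g : Finset ι → ℝ) (t : ℝ) : ℝ :=
  ∑ R ∈ s.powerset, t ^ R.card * (1 - t) ^ (s.card - R.card) * g R

theorem bernoulliExpect_empty (g : Finset ι → ℝ) (t : ℝ) : bernoulliExpect ∅ g t = g ∅ := by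
  simp [bernoulliExpect]

theorem bernoulliExpect_congr {s : Finset ι} {g h : Finset ι → ℝ} (hgh : ∀ R ⊆ s, g R = h R)
    (t : ℝ) : bernoulliExpect s g t = bernoulliExpect s h t :=
  sum_congr rfl fun R hR => by rw [hgh R (mem_powerset.1 hR)]

theorem bernoulliExpect_sub (s : Finset ι) (g h : Finset ι → ℝ) (t : ℝ) :
    bernoulliExpect s (fun R => g R - h R) t = bernoulliExpect s g t - bernoulliExpect s h t := by
  simp only [bernoulliExpect, mul_sub, sum_sub_distrib]

theorem bernoulliExpect_const_mul (s : Finset ι) (c : ℝ) (g : Finset ι → ℝ) (t : ℝ) :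
    bernoulliExpect s (fun R => c * g R) t = c * bernoulliExpect s g t := by
  simp only [bernoulliExpect, mul_sum]
  exact sum_congr rfl fun R _ => by ring

theorem bernoulliExpect_sum {κ : Type*} (s : Finset ι) (K : Finset κ)
    (g : κ → Finset ι → ℝ) (t : ℝ) :
    bernoulliExpect s (fun R => ∑ k ∈ K, g k R) t = ∑ k ∈ K, bernoulliExpect s (g k) t := by
  simp only [bernoulliExpect, mul_sum]
  exact sum_comm

theorem bernoulliExpect_mono (s : Finset ι) {g h : Finset ι → ℝ} (hgh : ∀ R, g R ≤ h R)
    {t : ℝ} (ht0 : 0 ≤ t) (ht1 : t ≤ 1) : bernoulliExpect s g t ≤ bernoulliExpect s h t :=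
  sum_le_sum fun R _ => mul_le_mul_of_nonneg_left (hgh R) (by bound)

variable [DecidableEq ι]

theorem bernoulliExpect_insert {a : ι} {s : Finset ι} (ha : a ∉ s) (g : Finset ι → ℝ) (t : ℝ) :
    bernoulliExpect (insert a s) g t =
      t * bernoulliExpect s (fun R => g (insert a R)) t + (1 - t) * bernoulliExpect s g t := by
  unfold bernoulliExpect
  rw [sum_powerset_insert ha, mul_sum, mul_sum, add_comm, card_insert_of_notMem ha]
  congr 1 <;> refine sum_congr rfl fun R hR => ?_
  · have hRs := mem_powerset.1 hR
    rw [card_insert_of_notMem fun h => ha (hRs h), Nat.add_sub_add_right, pow_succ]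
    ring
  · rw [Nat.sub_add_comm (card_le_card (mem_powerset.1 hR)), pow_succ]
    ring

theorem bernoulliExpect_const (s : Finset ι) (c t : ℝ) : bernoulliExpect s (fun _ => c) t = c := by
  induction s using Finset.induction_on with
  | empty => exact bernoulliExpect_empty _ t
  | @insert a s ha ih => rw [bernoulliExpect_insert ha, ih]; ring

theorem bernoulliExpect_zero (s : Finset ι) (g : Finset ι → ℝ) : bernoulliExpect s g 0 = g ∅ := by
  induction s using Finset.induction_on generalizing g with
  | empty => exact bernoulliExpect_empty g 0
  | @insert a s ha ih => rw [bernoulliExpect_insert ha, ih, ih]; ring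

theorem bernoulliExpect_one (s : Finset ι) (g : Finset ι → ℝ) : bernoulliExpect s g 1 = g s := by
  induction s using Finset.induction_on generalizing g with
  | empty => exact bernoulliExpect_empty g 1
  | @insert a s ha ih => rw [bernoulliExpect_insert ha, ih, ih]; ring

theorem bernoulliExpect_comp_erase {s : Finset ι} {i : ι} (hi : i ∈ s) (g : Finset ι → ℝ)
    (t : ℝ) : bernoulliExpect s (fun R => g (R.erase i)) t = bernoulliExpect (s.erase i) g t := by
  have hi' : i ∉ s.erase i := notMem_erase i s
  conv_lhs => rw [← insert_erase hi, bernoulliExpect_insert hi']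
  have hR : ∀ R ⊆ s.erase i, i ∉ R := fun R hR h => hi' (hR h)
  rw [bernoulliExpect_congr (h := g) (fun R hR' => by rw [erase_insert (hR R hR')]),
    bernoulliExpect_congr (g := fun R => g (R.erase i)) (h := g)
      (fun R hR' => by rw [erase_eq_of_notMem (hR R hR')])]
  ring

/-- Russo–Margulis formula. -/
theorem hasDerivAt_bernoulliExpect (s : Finset ι) (g : Finset ι → ℝ) (t : ℝ) :
    HasDerivAt (bernoulliExpect s g)
      (∑ i ∈ s, bernoulliExpect (s.erase i) (fun R => g (insert i R) - g R) t) t := by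
  induction s using Finset.induction_on generalizing g with
  | empty =>
    simpa [funext (bernoulliExpect_empty g)] using hasDerivAt_const t (g ∅)
  | @insert a s ha ih =>
    rw [funext (bernoulliExpect_insert ha g)]
    refine (((hasDerivAt_id t).mul (ih _)).add
      (((hasDerivAt_const t 1).sub (hasDerivAt_id t)).mul (ih g))).congr_deriv ?_
    have hsplit : ∀ i ∈ s, bernoulliExpect ((insert a s).erase i)
        (fun R => g (insert i R) - g R) t =
        t * bernoulliExpect (s.erase i)
          (fun R => g (insert i (insert a R)) - g (insert a R)) t +
        (1 - t) * bernoulliExpect (s.erase i) (fun R => g (insert i R) - g R) t := by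
      intro i hi
      rw [erase_insert_of_ne (ne_of_mem_of_not_mem hi ha).symm,
        bernoulliExpect_insert fun h => ha (mem_of_mem_erase h)]
    rw [sum_insert ha, erase_insert ha, bernoulliExpect_sub, sum_congr rfl hsplit,
      sum_add_distrib, ← mul_sum, ← mul_sum]
    simp only [id, Pi.sub_apply, insert_comm a]
    ring

end BernoulliExpect

theorem sum_mul_le_of_forall_le {α : Type*} [Fintype α] {w g : α → ℝ} {M : ℝ}
    (hw0 : ∀ a, 0 ≤ w a) (hw1 : ∑ a, w a = 1) (hg : ∀ a, g a ≤ M) : ∑ a, w a * g a ≤ M :=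
  calc ∑ a, w a * g a ≤ ∑ a, w a * M :=
        sum_le_sum fun a _ => mul_le_mul_of_nonneg_left (hg a) (hw0 a)
    _ = M := by rw [← sum_mul, hw1, one_mul]

theorem sum_prod_eq_one {ι : Type*} [Fintype ι] [DecidableEq ι] {β : ι → Type*}
    [∀ i, Fintype (β i)] {w : ∀ i, β i → ℝ} (hw1 : ∀ i, ∑ b, w i b = 1) :
    ∑ T : ∀ i, β i, ∏ i, w i (T i) = 1 := by
  rw [← Fintype.prod_sum]
  simp [hw1]

theorem prod_apply_update_mul {ι : Type*} [Fintype ι] [DecidableEq ι] {β : ι → Type*}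
    (w : ∀ i, β i → ℝ) (T : ∀ i, β i) (i : ι) (b : β i) :
    (∏ j, w j (Function.update T i b j)) * w i (T i) = (∏ j, w j (T j)) * w i b := by
  rw [← mul_prod_erase univ _ (mem_univ i), ← mul_prod_erase univ (fun j => w j (T j)) (mem_univ i),
    Function.update_self,
    prod_congr rfl fun j hj => by rw [Function.update_of_ne (ne_of_mem_erase hj)]]
  ring

theorem sum_mul_perm_of_invariant {α : Type*} [Fintype α] (σ : Equiv.Perm α) {W : α → ℝ}
    (hW : ∀ x, W (σ x) = W x) (h : α → ℝ) : ∑ x, W x * h (σ x) = ∑ x, W x * h x := by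
  rw [← Equiv.sum_comp σ (fun x => W x * h x)]
  simp only [hW]

theorem sum_prod_mul_apply_eq_sum_prod_mul_sum {ι β : Type*} [Fintype ι] [DecidableEq ι]
    [Fintype β] {w : β → ℝ} (hw1 : ∑ b, w b = 1) (i : ι) (Φ : (ι → β) → β → ℝ)
    (hΦ : ∀ T b, Φ (Function.update T i b) = Φ T) :
    ∑ T : ι → β, (∏ j, w (T j)) * Φ T (T i) =
      ∑ T : ι → β, (∏ j, w (T j)) * ∑ b, w b * Φ T b := by
  have hσ : Function.Involutive fun p : (ι → β) × β => (Function.update p.1 i p.2, p.1 i) := by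
    rintro ⟨T, b⟩
    simp
  calc ∑ T : ι → β, (∏ j, w (T j)) * Φ T (T i)
      = ∑ p : (ι → β) × β, ((∏ j, w (p.1 j)) * w p.2) * Φ p.1 (p.1 i) := by
        simp only [Fintype.sum_prod_type, mul_assoc, mul_comm (w _), ← mul_sum, hw1, mul_one]
    _ = ∑ p : (ι → β) × β, ((∏ j, w (p.1 j)) * w p.2) * Φ (hσ.toPerm _ p).1 (hσ.toPerm _ p).2 := by
        simp [hΦ]
    _ = ∑ T : ι → β, (∏ j, w (T j)) * ∑ b, w b * Φ T b := by
        refine (sum_mul_perm_of_invariant (hσ.toPerm _)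
          (fun p => prod_apply_update_mul (fun _ => w) p.1 i p.2) fun p => Φ p.1 p.2).trans ?_
        simp only [Fintype.sum_prod_type, mul_sum, mul_assoc]

theorem monotoneOn_exp_mul_sub_of_sub_le_deriv {F : ℝ → ℝ} {c a b : ℝ} (hF : Differentiable ℝ F)
    (h : ∀ u ∈ Set.Ioo a b, c - F u ≤ deriv F u) :
    MonotoneOn (fun u => Real.exp u * (F u - c)) (Set.Icc a b) := by
  have hd : ∀ u, HasDerivAt (fun u => Real.exp u * (F u - c))
      (Real.exp u * (F u - c) + Real.exp u * deriv F u) u :=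
    fun u => (Real.hasDerivAt_exp u).mul ((hF u).hasDerivAt.sub_const c)
  refine monotoneOn_of_deriv_nonneg (convex_Icc a b)
    (fun u _ => (hd u).continuousAt.continuousWithinAt)
    (fun u _ => (hd u).differentiableAt.differentiableWithinAt) fun u hu => ?_
  rw [interior_Icc] at hu
  rw [(hd u).deriv, ← mul_add]
  exact mul_nonneg (Real.exp_pos u).le (by linarith [h u hu])

section CorrelationGap

variable {ι β E : Type*} [DecidableEq E]

def coordSet (y : β → ι → E) (T : ι → β) (R : Finset ι) : Finset E :=
  R.image fun i => y (T i) i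

theorem coordSet_insert [DecidableEq ι] (y : β → ι → E) (T : ι → β) (i : ι) (R : Finset ι) :
    coordSet y T (insert i R) = insert (y (T i) i) (coordSet y T R) :=
  image_insert _ _ _

theorem coordSet_update_of_notMem [DecidableEq ι] (y : β → ι → E) (T : ι → β) {i : ι}
    {R : Finset ι} (hi : i ∉ R) (b : β) : coordSet y (Function.update T i b) R = coordSet y T R :=
  image_congr fun j hj => by rw [Function.update_of_ne (ne_of_mem_of_not_mem hj hi)]

/-- The expectation of `f (coordSet y T R)` when `T` is an i.i.d. sample from `w` and `R` keeps
each coordinate independently with probability `u`. -/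
noncomputable def gapCurve [Fintype ι] [DecidableEq ι] [Fintype β] (w : β → ℝ) (y : β → ι → E)
    (f : Finset E → ℝ) (u : ℝ) : ℝ :=
  ∑ T : ι → β, (∏ i, w (T i)) * bernoulliExpect univ (fun R => f (coordSet y T R)) u

variable [Fintype ι] [DecidableEq ι] [Fintype β] {w : β → ℝ} {f : Finset E → ℝ}

theorem gapCurve_zero (hw1 : ∑ b, w b = 1) (y : β → ι → E) : gapCurve w y f 0 = f ∅ := by
  simp only [gapCurve, bernoulliExpect_zero, coordSet, image_empty, ← sum_mul,
    sum_prod_eq_one fun _ => hw1, one_mul]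

theorem gapCurve_one (y : β → ι → E) :
    gapCurve w y f 1 = ∑ T : ι → β, (∏ i, w (T i)) * f (univ.image fun i => y (T i) i) := by
  simp only [gapCurve, bernoulliExpect_one, coordSet]

theorem hasDerivAt_gapCurve (y : β → ι → E) (u : ℝ) :
    HasDerivAt (gapCurve w y f)
      (∑ T : ι → β, (∏ i, w (T i)) * ∑ i, bernoulliExpect (univ.erase i)
        (fun R => f (coordSet y T (insert i R)) - f (coordSet y T R)) u) u :=
  HasDerivAt.fun_sum fun _ _ => (hasDerivAt_bernoulliExpect _ _ u).const_mul _

theorem sub_le_sum_insert_coordSet_erase (hw0 : ∀ b, 0 ≤ w b) (hw1 : ∑ b, w b = 1)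
    (hmono : MonotoneFn f) (hsub : SubmodularFn f) (y : β → ι → E) (T : ι → β) (R : Finset ι) :
    ∑ b, w b * f (univ.image (y b)) - f (coordSet y T R) ≤
      ∑ b, w b * ∑ i, (f (insert (y b i) (coordSet y T (R.erase i))) -
        f (coordSet y T (R.erase i))) := by
  rw [← one_mul (f (coordSet y T R)), ← hw1, sum_mul, ← sum_sub_distrib]
  refine sum_le_sum fun b _ => ?_
  rw [← mul_sub]
  refine mul_le_mul_of_nonneg_left ?_ (hw0 b)
  refine (hsub.sub_le_sum_insert_sub hmono _ (y b) univ).trans (sum_le_sum fun i _ => ?_)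
  exact hsub.insert_sub_le hmono (image_subset_image (erase_subset i R)) (y b i)

theorem sub_gapCurve_le_deriv (hw0 : ∀ b, 0 ≤ w b) (hw1 : ∑ b, w b = 1) (hmono : MonotoneFn f)
    (hsub : SubmodularFn f) (y : β → ι → E) {u : ℝ} (hu0 : 0 ≤ u) (hu1 : u ≤ 1) :
    ∑ b, w b * f (univ.image (y b)) - gapCurve w y f u ≤ deriv (gapCurve w y f) u := by
  set c := ∑ b, w b * f (univ.image (y b))
  let m (T : ι → β) (b : β) (i : ι) (R : Finset ι) : ℝ :=
    f (insert (y b i) (coordSet y T R)) - f (coordSet y T R)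
  have hT : ∀ T : ι → β, c - bernoulliExpect univ (fun R => f (coordSet y T R)) u ≤
      ∑ i, ∑ b, w b * bernoulliExpect (univ.erase i) (m T b i) u := by
    intro T
    calc c - bernoulliExpect univ (fun R => f (coordSet y T R)) u
        = bernoulliExpect univ (fun R => c - f (coordSet y T R)) u := by
          rw [bernoulliExpect_sub, bernoulliExpect_const]
      _ ≤ bernoulliExpect univ (fun R => ∑ b, w b * ∑ i, m T b i (R.erase i)) u :=
          bernoulliExpect_mono _ (sub_le_sum_insert_coordSet_erase hw0 hw1 hmono hsub y T) hu0 hu1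
      _ = ∑ i, ∑ b, w b * bernoulliExpect (univ.erase i) (m T b i) u := by
          simp only [bernoulliExpect_sum, bernoulliExpect_const_mul,
            bernoulliExpect_comp_erase (mem_univ _), mul_sum]
          exact sum_comm
  -- For `R ⊆ univ.erase i`, `m T b i R` ignores `T i`: a fresh draw `b` may replace `T i`.
  have hresample : ∀ i, ∑ T : ι → β, (∏ j, w (T j)) *
      ∑ b, w b * bernoulliExpect (univ.erase i) (m T b i) u =
      ∑ T : ι → β, (∏ j, w (T j)) * bernoulliExpect (univ.erase i)
        (fun R => f (coordSet y T (insert i R)) - f (coordSet y T R)) u := by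
    intro i
    rw [← sum_prod_mul_apply_eq_sum_prod_mul_sum hw1 i
      (fun T b => bernoulliExpect (univ.erase i) (m T b i) u)]
    · simp only [m, coordSet_insert]
    · intro T b
      funext b'
      exact bernoulliExpect_congr (fun R hR => by
        simp only [m, coordSet_update_of_notMem y T (fun h => notMem_erase i univ (hR h))]) u
  rw [(hasDerivAt_gapCurve y u).deriv]
  calc c - gapCurve w y f u
      = ∑ T : ι → β, (∏ j, w (T j)) *
          (c - bernoulliExpect univ (fun R => f (coordSet y T R)) u) := by
        simp only [gapCurve, mul_sub, sum_sub_distrib, ← sum_mul, sum_prod_eq_one fun _ => hw1,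
          one_mul]
    _ ≤ ∑ T : ι → β, (∏ j, w (T j)) *
          ∑ i, ∑ b, w b * bernoulliExpect (univ.erase i) (m T b i) u :=
        sum_le_sum fun T _ => mul_le_mul_of_nonneg_left (hT T) (prod_nonneg fun j _ => hw0 (T j))
    _ = _ := by
        simp only [mul_sum (s := univ) (f := fun i => ∑ b, _)]
        rw [sum_comm, sum_congr rfl fun i _ => hresample i]
        simp only [mul_sum]
        exact sum_comm

theorem correlation_gap (hw0 : ∀ b, 0 ≤ w b) (hw1 : ∑ b, w b = 1) (y : β → ι → E)
    (hf0 : ∀ X, 0 ≤ f X) (hmono : MonotoneFn f) (hsub : SubmodularFn f) :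
    (1 - (Real.exp 1)⁻¹) * ∑ b, w b * f (univ.image (y b)) ≤
      ∑ T : ι → β, (∏ i, w (T i)) * f (univ.image fun i => y (T i) i) := by
  set c := ∑ b, w b * f (univ.image (y b))
  have hmon := monotoneOn_exp_mul_sub_of_sub_le_deriv (c := c)
    (fun u => (hasDerivAt_gapCurve y u).differentiableAt)
    fun u hu => sub_gapCurve_le_deriv hw0 hw1 hmono hsub y hu.1.le hu.2.le
  have h01 := hmon (Set.left_mem_Icc.2 zero_le_one) (Set.right_mem_Icc.2 zero_le_one) zero_le_one
  simp only [gapCurve_zero hw1, gapCurve_one, Real.exp_zero, one_mul] at h01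
  calc (1 - (Real.exp 1)⁻¹) * c = c + (Real.exp 1)⁻¹ * (0 - c) := by ring
    _ ≤ c + (Real.exp 1)⁻¹ * (Real.exp 1 * (∑ T : ι → β, (∏ i, w (T i)) *
          f (univ.image fun i => y (T i) i) - c)) := by
        gcongr
        exact (sub_le_sub_right (hf0 ∅) c).trans h01
    _ = _ := by field_simp; ring

end CorrelationGap

/-- For a product prior, replacing the `i`-th type of the `i`-th profile of an i.i.d. sample `T`
by the `i`-th type of a fresh profile yields again an i.i.d. sample. -/
theorem sum_prod_mul_sum_update_diag {ι : Type*} [Fintype ι] [DecidableEq ι] {Θ : ι → Type*}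
    [∀ i, Fintype (Θ i)] {ρ : (∀ i, Θ i) → ℝ} (hρ1 : ∑ θ, ρ θ = 1) {ρi : ∀ i, Θ i → ℝ}
    (hprod : ∀ θ, ρ θ = ∏ i, ρi i (θ i)) (h : (ι → ∀ i, Θ i) → ℝ) :
    ∑ T : ι → ∀ i, Θ i, (∏ i, ρ (T i)) * ∑ θ, ρ θ * h (fun i => Function.update (T i) i (θ i)) =
      ∑ T : ι → ∀ i, Θ i, (∏ i, ρ (T i)) * h T := by
  have hσ : Function.Involutive fun p : (ι → ∀ i, Θ i) × (∀ i, Θ i) =>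
      ((fun i => Function.update (p.1 i) i (p.2 i)), fun i => p.1 i i) := by
    rintro ⟨T, θ⟩
    ext <;> simp
  have hW : ∀ p : (ι → ∀ i, Θ i) × (∀ i, Θ i),
      (∏ i, ρ ((hσ.toPerm _ p).1 i)) * ρ (hσ.toPerm _ p).2 = (∏ i, ρ (p.1 i)) * ρ p.2 := by
    rintro ⟨T, θ⟩
    simp only [Function.Involutive.coe_toPerm, hprod, ← prod_mul_distrib]
    exact prod_congr rfl fun i _ => prod_apply_update_mul ρi (T i) i (θ i)
  calc ∑ T : ι → ∀ i, Θ i, (∏ i, ρ (T i)) * ∑ θ, ρ θ * h (fun i => Function.update (T i) i (θ i))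
      = ∑ p : (ι → ∀ i, Θ i) × (∀ i, Θ i), ((∏ i, ρ (p.1 i)) * ρ p.2) * h (hσ.toPerm _ p).1 := by
        simp only [Fintype.sum_prod_type, mul_sum, mul_assoc, Function.Involutive.coe_toPerm]
    _ = ∑ p : (ι → ∀ i, Θ i) × (∀ i, Θ i), ((∏ i, ρ (p.1 i)) * ρ p.2) * h p.1 :=
        sum_mul_perm_of_invariant (hσ.toPerm _) hW fun p => h p.1
    _ = ∑ T : ι → ∀ i, Θ i, (∏ i, ρ (T i)) * h T := by
        simp only [Fintype.sum_prod_type, mul_assoc, mul_comm (ρ _), ← mul_sum, hρ1, mul_one]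

section BayesianGame

variable {n : ℕ} {Θ : Fin n → Type*} [∀ i, Fintype (Θ i)] [∀ i, DecidableEq (Θ i)]
  {E : Type*} [Fintype E] [DecidableEq E] (Act : ∀ i, Θ i → Finset E)
  (hAne : ∀ i t, (Act i t).Nonempty) (ρ : (∀ i, Θ i) → ℝ) (f : Finset E → ℝ)

theorem exists_gOPT_eq_sum :
    ∃ A : (∀ i, Θ i) → Fin n → E, (∀ θ i, A θ i ∈ Act i (θ i)) ∧
      gOPT Act hAne ρ f = ∑ θ, ρ θ * f (univ.image (A θ)) := by
  choose A hA hsup using fun θ : ∀ i, Θ i =>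
    exists_mem_eq_sup' (Fintype.piFinset_nonempty.mpr fun i => hAne i (θ i))
      fun a : Fin n → E => f (univ.image a)
  exact ⟨A, fun θ => Fintype.mem_piFinset.1 (hA θ), sum_congr rfl fun θ _ => by rw [hsup]⟩

theorem sum_le_gSTR (s : ∀ i, Θ i → E) (hs : ∀ i t, s i t ∈ Act i t) :
    ∑ θ, ρ θ * f (univ.image fun i => s i (θ i)) ≤ gSTR Act hAne ρ f :=
  le_sup' (fun s : ∀ i, Θ i → E => ∑ θ, ρ θ * f (univ.image fun i => s i (θ i)))
    (Fintype.mem_piFinset.2 fun i => Fintype.mem_piFinset.2 (hs i))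

end BayesianGame

theorem str_ge_one_sub_inv_e_mul_opt_of_independent_general
    {n : ℕ} {Θ : Fin n → Type*} [∀ i, Fintype (Θ i)] [∀ i, DecidableEq (Θ i)]
    {E : Type*} [Fintype E] [DecidableEq E]
    (Act : ∀ i, Θ i → Finset E) (hAne : ∀ i t, (Act i t).Nonempty)
    (ρ : (∀ i, Θ i) → ℝ) (hρ0 : ∀ θ, 0 ≤ ρ θ) (hρ1 : ∑ θ, ρ θ = 1)
    (ρi : ∀ i, Θ i → ℝ)
    (hprod : ∀ θ, ρ θ = ∏ i, ρi i (θ i))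
    (f : Finset E → ℝ) (hf0 : ∀ X, 0 ≤ f X)
    (hmono : MonotoneFn f) (hsub : SubmodularFn f) :
    (1 - (Real.exp 1)⁻¹) * gOPT Act hAne ρ f ≤ gSTR Act hAne ρ f := by
  obtain ⟨A, hA, hOPT⟩ := exists_gOPT_eq_sum Act hAne ρ f
  -- `T` is an i.i.d. sample of type profiles; player `i` acts as if the others had types `T i`.
  let strategy (T : Fin n → ∀ i, Θ i) (i : Fin n) (t : Θ i) : E := A (Function.update (T i) i t) i
  calc (1 - (Real.exp 1)⁻¹) * gOPT Act hAne ρ f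
      ≤ ∑ T : Fin n → ∀ i, Θ i, (∏ i, ρ (T i)) * f (univ.image fun i => A (T i) i) :=
        hOPT ▸ correlation_gap hρ0 hρ1 A hf0 hmono hsub
    _ = ∑ T : Fin n → ∀ i, Θ i, (∏ i, ρ (T i)) *
          ∑ θ, ρ θ * f (univ.image fun i => strategy T i (θ i)) :=
        (sum_prod_mul_sum_update_diag hρ1 hprod _).symm
    _ ≤ gSTR Act hAne ρ f :=
        sum_mul_le_of_forall_le (fun T => prod_nonneg fun i _ => hρ0 (T i))
          (sum_prod_eq_one fun _ => hρ1) fun T =>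
            sum_le_gSTR Act hAne ρ f (strategy T) fun i t => by
              simpa using hA (Function.update (T i) i t) i

/-- In any Bayesian game with submodular social welfare whose prior is
independent (a product distribution), `STR ≥ (1 − 1/e) · OPT`: the strategy
representability gap is at least `1 − 1/e`. -/
theorem str_ge_one_sub_inv_e_mul_opt_of_independent
    {n : ℕ} {Θ : Fin n → Type*} [∀ i, Fintype (Θ i)] [∀ i, DecidableEq (Θ i)]
    [∀ i, Nonempty (Θ i)]
    {E : Type*} [Fintype E] [DecidableEq E]
    (Act : ∀ i, Θ i → Finset E) (hAne : ∀ i t, (Act i t).Nonempty)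
    (hdisj : ∀ p q : Σ i : Fin n, Θ i, p ≠ q → Disjoint (Act p.1 p.2) (Act q.1 q.2))
    (ρ : (∀ i, Θ i) → ℝ) (hρ0 : ∀ θ, 0 ≤ ρ θ) (hρ1 : ∑ θ, ρ θ = 1)
    (ρi : ∀ i, Θ i → ℝ) (hρi0 : ∀ i t, 0 ≤ ρi i t) (hρi1 : ∀ i, ∑ t, ρi i t = 1)
    (hprod : ∀ θ, ρ θ = ∏ i, ρi i (θ i))
    (f : Finset E → ℝ) (hf0 : ∀ X, 0 ≤ f X)
    (hmono : MonotoneFn f) (hsub : SubmodularFn f) :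
    (1 - (Real.exp 1)⁻¹) * gOPT Act hAne ρ f ≤ gSTR Act hAne ρ f :=
  str_ge_one_sub_inv_e_mul_opt_of_independent_general Act hAne ρ hρ0 hρ1 ρi hprod f hf0 hmono hsub
end

section
/- Consider a Bayesian game with submodular social welfare with n players where √n is an integer. For each type profile θ fix an optimal action profile a^θ ∈ argmax_{a ∈ A^θ} SW(a). For each player i and type θ_i with positive marginal probability, define w_i^{θ_i}(a_i) = Pr_{θ_{−i} ∼ ρ|_{θ_i}}(a_i^{(θ_i,θ_{−i})} = a_i) for a_i ∈ A_i^{θ_i}, and define y_i^{θ_i} ∈ [0,1]^E by y_i^{θ_i}(e) = √n · w_i^{θ_i}(e) if e ∈ A_i^{θ_i} and w_i^{θ_i}(e) ≤ 1/√n, and y_i^{θ_i}(e) = 0 otherwise. Let F : [0,1]^E → ℝ be the multilinear extension of f. Then STR ≥ ((1 − 1/e)/n) · Σ_{i=1}^n E_{θ∼ρ}[F(y_i^{θ_i})]. -/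
open Finset

set_option linter.unusedSectionVars false

section ML
variable {α : Type*} [Fintype α] [DecidableEq α]

noncomputable def mlin (P : Finset α) (c : Finset α → ℝ) (x : α → ℝ) : ℝ :=
  ∑ Y ∈ P.powerset, c Y * (∏ u ∈ Y, x u) * ∏ u ∈ P \ Y, (1 - x u)

lemma mlext_eq_mlin (f : Finset α → ℝ) (x : α → ℝ) : mlext f x = mlin univ f x := by
  rw [mlext, mlin, powerset_univ]
  refine Fintype.sum_congr _ _ fun X => ?_
  rw [compl_eq_univ_sdiff]

lemma mlin_empty (c : Finset α → ℝ) (x : α → ℝ) : mlin ∅ c x = c ∅ := by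
  simp [mlin]

lemma mlin_congr {P : Finset α} {c : Finset α → ℝ} {x x' : α → ℝ}
    (h : ∀ u ∈ P, x u = x' u) : mlin P c x = mlin P c x' := by
  refine Finset.sum_congr rfl fun Y hY => ?_
  rw [mem_powerset] at hY
  have h1 : ∏ u ∈ Y, x u = ∏ u ∈ Y, x' u := prod_congr rfl fun u hu => h u (hY hu)
  have h2 : ∏ u ∈ P \ Y, (1 - x u) = ∏ u ∈ P \ Y, (1 - x' u) :=
    prod_congr rfl fun u hu => by rw [h u (sdiff_subset hu)]
  rw [h1, h2]

lemma mlin_nonneg {P : Finset α} {c : Finset α → ℝ} {x : α → ℝ}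
    (hc : ∀ Y, 0 ≤ c Y) (hx0 : ∀ u, 0 ≤ x u) (hx1 : ∀ u, x u ≤ 1) : 0 ≤ mlin P c x := by
  refine Finset.sum_nonneg fun Y _ => ?_
  have h1 : (0:ℝ) ≤ ∏ u ∈ Y, x u := prod_nonneg fun u _ => hx0 u
  have h2 : (0:ℝ) ≤ ∏ u ∈ P \ Y, (1 - x u) := prod_nonneg fun u _ => by linarith [hx1 u]
  exact mul_nonneg (mul_nonneg (hc Y) h1) h2

lemma mlin_le_mlin {P : Finset α} {c c' : Finset α → ℝ} {x : α → ℝ}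
    (hc : ∀ Y ∈ P.powerset, c Y ≤ c' Y) (hx0 : ∀ u, 0 ≤ x u) (hx1 : ∀ u, x u ≤ 1) :
    mlin P c x ≤ mlin P c' x := by
  refine Finset.sum_le_sum fun Y hY => ?_
  have h1 : (0:ℝ) ≤ ∏ u ∈ Y, x u := prod_nonneg fun u _ => hx0 u
  have h2 : (0:ℝ) ≤ ∏ u ∈ P \ Y, (1 - x u) := prod_nonneg fun u _ => by linarith [hx1 u]
  exact mul_le_mul_of_nonneg_right (mul_le_mul_of_nonneg_right (hc Y hY) h1) h2

lemma mlin_sub {P : Finset α} (c c' : Finset α → ℝ) (x : α → ℝ) :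
    mlin P (fun Y => c Y - c' Y) x = mlin P c x - mlin P c' x := by
  rw [mlin, mlin, mlin, ← Finset.sum_sub_distrib]
  exact Finset.sum_congr rfl fun Y _ => by ring

lemma mlin_neg {P : Finset α} (c : Finset α → ℝ) (x : α → ℝ) :
    mlin P (fun Y => -(c Y)) x = -(mlin P c x) := by
  rw [mlin, mlin, ← Finset.sum_neg_distrib]
  exact Finset.sum_congr rfl fun Y _ => by ring

lemma mlin_key {P : Finset α} {e : α} (he : e ∈ P) (c : Finset α → ℝ) (x : α → ℝ) :
    mlin P c x = (1 - x e) * mlin (P.erase e) c x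
      + x e * mlin (P.erase e) (fun Y => c (insert e Y)) x := by
  have hPe : P = insert e (P.erase e) := (insert_erase he).symm
  have hne : e ∉ P.erase e := notMem_erase e P
  rw [mlin]
  rw [show ∑ Y ∈ P.powerset, c Y * (∏ u ∈ Y, x u) * ∏ u ∈ P \ Y, (1 - x u)
      = ∑ Y ∈ (insert e (P.erase e)).powerset, c Y * (∏ u ∈ Y, x u) * ∏ u ∈ P \ Y, (1 - x u)
    from by rw [← hPe]]
  rw [Finset.sum_powerset_insert hne]
  have h1 : ∀ Y ∈ (P.erase e).powerset,
      c Y * (∏ u ∈ Y, x u) * ∏ u ∈ P \ Y, (1 - x u)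
        = (1 - x e) * (c Y * (∏ u ∈ Y, x u) * ∏ u ∈ (P.erase e) \ Y, (1 - x u)) := by
    intro Y hY
    rw [mem_powerset] at hY
    have heY : e ∉ Y := fun h => hne (hY h)
    have hsd : P \ Y = insert e ((P.erase e) \ Y) := by
      ext u
      simp only [mem_sdiff, mem_insert, mem_erase]
      constructor
      · rintro ⟨hu, hnu⟩
        by_cases hue : u = e
        · exact Or.inl hue
        · exact Or.inr ⟨⟨hue, hu⟩, hnu⟩
      · rintro (rfl | ⟨⟨_, hu⟩, hnu⟩)
        · exact ⟨he, heY⟩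
        · exact ⟨hu, hnu⟩
    have hnes : e ∉ (P.erase e) \ Y := fun h => hne (mem_sdiff.mp h).1
    rw [hsd, prod_insert hnes]; ring
  have h2 : ∀ Y ∈ (P.erase e).powerset,
      c (insert e Y) * (∏ u ∈ insert e Y, x u) * ∏ u ∈ P \ insert e Y, (1 - x u)
        = x e * (c (insert e Y) * (∏ u ∈ Y, x u) * ∏ u ∈ (P.erase e) \ Y, (1 - x u)) := by
    intro Y hY
    rw [mem_powerset] at hY
    have heY : e ∉ Y := fun h => hne (hY h)
    have hsd : P \ insert e Y = (P.erase e) \ Y := by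
      ext u
      simp only [mem_sdiff, mem_insert, mem_erase]
      tauto
    rw [hsd, prod_insert heY]; ring
  rw [Finset.sum_congr rfl h1, Finset.sum_congr rfl h2, ← Finset.mul_sum, ← Finset.mul_sum]
  rfl

lemma mlin_eval_zero {P : Finset α} {c : Finset α → ℝ} {x : α → ℝ}
    (hx : ∀ u ∈ P, x u = 0) : mlin P c x = c ∅ := by
  rw [mlin]
  rw [Finset.sum_eq_single ∅]
  · simp only [prod_empty, sdiff_empty, mul_one]
    rw [prod_congr rfl fun u hu => by rw [hx u hu]]
    simp
  · intro Y hY hYne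
    rw [mem_powerset] at hY
    obtain ⟨u, hu⟩ := Finset.nonempty_iff_ne_empty.mpr hYne
    rw [Finset.prod_eq_zero hu (hx u (hY hu))]
    ring
  · intro h
    exact absurd (Finset.empty_mem_powerset P) h

lemma mlin_mono_x (x x' : α → ℝ) (hx0 : ∀ u, 0 ≤ x u) (hx'1 : ∀ u, x' u ≤ 1)
    (hxx : ∀ u, x u ≤ x' u) :
    ∀ (P : Finset α) (c : Finset α → ℝ), (∀ X Y : Finset α, X ⊆ Y → Y ⊆ P → c X ≤ c Y) →
    mlin P c x ≤ mlin P c x' := by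
  have hx1 : ∀ u, x u ≤ 1 := fun u => le_trans (hxx u) (hx'1 u)
  have hx'0 : ∀ u, 0 ≤ x' u := fun u => le_trans (hx0 u) (hxx u)
  intro P
  induction P using Finset.induction_on with
  | empty => intro c hc; rw [mlin_empty, mlin_empty]
  | @insert a Q ha ih =>
    intro c hc
    rw [mlin_key (mem_insert_self a Q) c x, mlin_key (mem_insert_self a Q) c x',
      erase_insert ha]
    have hAA' : mlin Q c x ≤ mlin Q c x' :=
      ih c fun X Y h1 h2 => hc X Y h1 (h2.trans (subset_insert a Q))
    have hBB' : mlin Q (fun Y => c (insert a Y)) x ≤ mlin Q (fun Y => c (insert a Y)) x' :=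
      ih _ fun X Y h1 h2 => hc _ _ (insert_subset_insert a h1)
        (insert_subset_insert a (h2.trans (Finset.Subset.refl Q)))
    have hAB : mlin Q c x ≤ mlin Q (fun Y => c (insert a Y)) x :=
      mlin_le_mlin (fun Y hY => hc Y (insert a Y) (subset_insert a Y)
        (insert_subset_insert a (mem_powerset.mp hY))) hx0 hx1
    have h1 : 0 ≤ x a := hx0 a
    have h2 : x a ≤ x' a := hxx a
    have h3 : x' a ≤ 1 := hx'1 a
    nlinarith [mul_le_mul_of_nonneg_right h2 (by linarith : (0:ℝ) ≤ mlin Q (fun Y => c (insert a Y)) x - mlin Q c x),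
      mul_le_mul_of_nonneg_left hAA' (by linarith : (0:ℝ) ≤ 1 - x' a),
      mul_le_mul_of_nonneg_left hBB' (by linarith : (0:ℝ) ≤ x' a)]

lemma mlin_anti_x (x x' : α → ℝ) (hx0 : ∀ u, 0 ≤ x u) (hx'1 : ∀ u, x' u ≤ 1)
    (hxx : ∀ u, x u ≤ x' u)
    (P : Finset α) (c : Finset α → ℝ) (hc : ∀ X Y : Finset α, X ⊆ Y → Y ⊆ P → c Y ≤ c X) :
    mlin P c x' ≤ mlin P c x := by
  have := mlin_mono_x x x' hx0 hx'1 hxx P (fun Y => -(c Y))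
    (fun X Y h1 h2 => neg_le_neg (hc X Y h1 h2))
  rw [mlin_neg, mlin_neg] at this
  linarith

noncomputable def mld (c : Finset α → ℝ) (e : α) (x : α → ℝ) : ℝ :=
  mlin (univ.erase e) (fun Y => c (insert e Y)) x - mlin (univ.erase e) c x

lemma mld_nonneg {c : Finset α → ℝ} (hc : MonotoneFn c) {e : α} {x : α → ℝ}
    (hx0 : ∀ u, 0 ≤ x u) (hx1 : ∀ u, x u ≤ 1) : 0 ≤ mld c e x :=
  sub_nonneg.mpr (mlin_le_mlin (fun Y _ => hc (subset_insert e Y)) hx0 hx1)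

lemma mld_congr {c : Finset α → ℝ} {e : α} {x x' : α → ℝ}
    (h : ∀ u, u ≠ e → x u = x' u) : mld c e x = mld c e x' := by
  rw [mld, mld, mlin_congr fun u hu => h u (mem_erase.mp hu).1,
    mlin_congr (c := c) fun u hu => h u (mem_erase.mp hu).1]

lemma mld_anti {c : Finset α → ℝ} (hc : SubmodularFn c) {e : α} (x x' : α → ℝ)
    (hx0 : ∀ u, 0 ≤ x u) (hx'1 : ∀ u, x' u ≤ 1) (hxx : ∀ u, x u ≤ x' u) :
    mld c e x' ≤ mld c e x := by
  have hrw : ∀ y : α → ℝ, mld c e y = mlin (univ.erase e) (fun Y => c (insert e Y) - c Y) y := by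
    intro y; rw [mlin_sub]; rfl
  rw [hrw, hrw]
  refine mlin_anti_x x x' hx0 hx'1 hxx _ _ fun X Y h1 h2 => ?_
  exact hc h1 e (fun h => (mem_erase.mp (h2 h)).1 rfl)

lemma mlin_univ_affine (e : α) (c : Finset α → ℝ) (x : α → ℝ) :
    mlin univ c x = mlin (univ.erase e) c x + x e * mld c e x := by
  rw [mlin_key (mem_univ e) c x, mld]; ring

lemma L1upper_aux {c : Finset α → ℝ} (hc : SubmodularFn c) (x : α → ℝ) (hx0 : ∀ u, 0 ≤ x u) :
    ∀ (Q : Finset α) (v : α → ℝ), (∀ e, 0 ≤ v e) → (∀ e, e ∉ Q → v e = 0) →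
    (∀ u, x u + v u ≤ 1) →
    mlin univ c (fun u => x u + v u) ≤ mlin univ c x + ∑ e ∈ Q, v e * mld c e x := by
  intro Q
  induction Q using Finset.induction_on with
  | empty =>
    intro v hv0 hvQ hxv
    have hv : (fun u => x u + v u) = x := funext fun u => by
      rw [hvQ u (notMem_empty u)]; ring
    rw [hv]; simp
  | @insert a Q ha ih =>
    intro v hv0 hvQ hxv
    set v' : α → ℝ := Function.update v a 0 with hv'def
    have hv'a : v' a = 0 := Function.update_self a 0 v
    have hv'ne : ∀ u, u ≠ a → v' u = v u := fun u hu => Function.update_of_ne hu 0 v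
    have hv'0 : ∀ e, 0 ≤ v' e := by
      intro e; by_cases h : e = a
      · rw [h, hv'a]
      · rw [hv'ne e h]; exact hv0 e
    have hv'le : ∀ e, v' e ≤ v e := by
      intro e; by_cases h : e = a
      · rw [h, hv'a]; exact hv0 a
      · rw [hv'ne e h]
    have hvQ' : ∀ e, e ∉ Q → v' e = 0 := by
      intro e he; by_cases h : e = a
      · rw [h, hv'a]
      · rw [hv'ne e h]; exact hvQ e (by simp [he, h])
    have hxv' : ∀ u, x u + v' u ≤ 1 := fun u => le_trans (by linarith [hv'le u]) (hxv u)
    have hxle : ∀ u, x u ≤ x u + v' u := fun u => by linarith [hv'0 u]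
    have hsplit : mlin univ c (fun u => x u + v u)
        = mlin univ c (fun u => x u + v' u) + v a * mld c a (fun u => x u + v' u) := by
      rw [mlin_univ_affine a c (fun u => x u + v u),
        mlin_univ_affine a c (fun u => x u + v' u)]
      have h1 : mlin (univ.erase a) c (fun u => x u + v u)
          = mlin (univ.erase a) c (fun u => x u + v' u) :=
        mlin_congr fun u hu => by rw [hv'ne u (mem_erase.mp hu).1]
      have h2 : mld c a (fun u => x u + v u) = mld c a (fun u => x u + v' u) :=
        mld_congr fun u hu => by rw [hv'ne u hu]
      rw [h1, h2, hv'a]; ring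
    have hanti : mld c a (fun u => x u + v' u) ≤ mld c a x :=
      mld_anti hc x _ hx0 hxv' hxle
    have hihv := ih v' hv'0 hvQ' hxv'
    have hsum : ∑ e ∈ Q, v' e * mld c e x = ∑ e ∈ Q, v e * mld c e x :=
      Finset.sum_congr rfl fun e he => by rw [hv'ne e (fun h => ha (h ▸ he))]
    rw [Finset.sum_insert ha, hsplit]
    have := mul_le_mul_of_nonneg_left hanti (hv0 a)
    linarith [hsum ▸ hihv]

lemma L1lower_aux {c : Finset α → ℝ} (hc : SubmodularFn c) (x : α → ℝ) (hx0 : ∀ u, 0 ≤ x u) :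
    ∀ (Q : Finset α) (v : α → ℝ), (∀ e, 0 ≤ v e) → (∀ e, e ∉ Q → v e = 0) →
    (∀ u, x u + v u ≤ 1) →
    mlin univ c x + ∑ e ∈ Q, v e * mld c e (fun u => x u + v u)
      ≤ mlin univ c (fun u => x u + v u) := by
  intro Q
  induction Q using Finset.induction_on with
  | empty =>
    intro v hv0 hvQ hxv
    have hv : (fun u => x u + v u) = x := funext fun u => by
      rw [hvQ u (notMem_empty u)]; ring
    rw [hv]; simp
  | @insert a Q ha ih =>
    intro v hv0 hvQ hxv
    set v' : α → ℝ := Function.update v a 0 with hv'def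
    have hv'a : v' a = 0 := Function.update_self a 0 v
    have hv'ne : ∀ u, u ≠ a → v' u = v u := fun u hu => Function.update_of_ne hu 0 v
    have hv'0 : ∀ e, 0 ≤ v' e := by
      intro e; by_cases h : e = a
      · rw [h, hv'a]
      · rw [hv'ne e h]; exact hv0 e
    have hv'le : ∀ e, v' e ≤ v e := by
      intro e; by_cases h : e = a
      · rw [h, hv'a]; exact hv0 a
      · rw [hv'ne e h]
    have hvQ' : ∀ e, e ∉ Q → v' e = 0 := by
      intro e he; by_cases h : e = a
      · rw [h, hv'a]
      · rw [hv'ne e h]; exact hvQ e (by simp [he, h])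
    have hxv' : ∀ u, x u + v' u ≤ 1 := fun u => le_trans (by linarith [hv'le u]) (hxv u)
    have hxv1 : ∀ u, x u + v u ≤ 1 := hxv
    have hxv'0 : ∀ u, 0 ≤ x u + v' u := fun u => by linarith [hx0 u, hv'0 u]
    have hlexv : ∀ u, x u + v' u ≤ x u + v u := fun u => by linarith [hv'le u]
    have hsplit : mlin univ c (fun u => x u + v u)
        = mlin univ c (fun u => x u + v' u) + v a * mld c a (fun u => x u + v' u) := by
      rw [mlin_univ_affine a c (fun u => x u + v u),
        mlin_univ_affine a c (fun u => x u + v' u)]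
      have h1 : mlin (univ.erase a) c (fun u => x u + v u)
          = mlin (univ.erase a) c (fun u => x u + v' u) :=
        mlin_congr fun u hu => by rw [hv'ne u (mem_erase.mp hu).1]
      have h2 : mld c a (fun u => x u + v u) = mld c a (fun u => x u + v' u) :=
        mld_congr fun u hu => by rw [hv'ne u hu]
      rw [h1, h2, hv'a]; ring
    have hanti : mld c a (fun u => x u + v u) ≤ mld c a (fun u => x u + v' u) :=
      mld_anti hc _ _ hxv'0 hxv1 hlexv
    have hihv := ih v' hv'0 hvQ' hxv'
    have hsum : ∑ e ∈ Q, v e * mld c e (fun u => x u + v u)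
        ≤ ∑ e ∈ Q, v' e * mld c e (fun u => x u + v' u) := by
      refine Finset.sum_le_sum fun e he => ?_
      rw [hv'ne e (fun h => ha (h ▸ he))]
      exact mul_le_mul_of_nonneg_left (mld_anti hc _ _ hxv'0 hxv1 hlexv) (hv0 e)
    rw [Finset.sum_insert ha, hsplit]
    have := mul_le_mul_of_nonneg_left hanti (hv0 a)
    linarith

lemma star_mix {c : Finset α → ℝ} (hsub : SubmodularFn c)
    (D : Finset α) (w z : α → ℝ)
    (hw0 : ∀ e, 0 ≤ w e) (hwsup : ∀ e, e ∉ D → w e = 0) (hw1 : ∑ e ∈ D, w e = 1)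
    (hz0 : ∀ e, 0 ≤ z e) (hzD : ∀ e ∈ D, z e = 0) (hzw : ∀ e, z e + w e ≤ 1) :
    mlin univ c (fun e => z e + w e)
      ≤ ∑ e ∈ D, w e * mlin univ (fun X => c (insert e X)) z := by
  have hL1 := L1upper_aux hsub z hz0 univ w hw0 (by simp) hzw
  have hres : ∑ e ∈ univ, w e * mld c e z = ∑ e ∈ D, w e * mld c e z :=
    (Finset.sum_subset (subset_univ D) fun e _ he => by rw [hwsup e he]; ring).symm
  have key : ∀ e ∈ D, mlin univ c z + mld c e z = mlin univ (fun X => c (insert e X)) z := by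
    intro e he
    have hz_e : z e = 0 := hzD e he
    have h1 : mlin univ c z = mlin (univ.erase e) c z := by
      rw [mlin_univ_affine e c z, hz_e]; ring
    have h2 : mlin univ (fun X => c (insert e X))  z
        = mlin (univ.erase e) (fun Y => c (insert e Y)) z := by
      rw [mlin_univ_affine e (fun X => c (insert e X)) z, hz_e]; ring
    rw [h1, h2, mld]; ring
  calc mlin univ c (fun e => z e + w e)
      ≤ mlin univ c z + ∑ e ∈ univ, w e * mld c e z := hL1
    _ = ∑ e ∈ D, w e * (mlin univ c z + mld c e z) := by
        rw [hres, Finset.sum_congr rfl (fun (e:α) (_ : e ∈ D) => mul_add (w e) (mlin univ c z) (mld c e z)),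
          Finset.sum_add_distrib, ← Finset.sum_mul, hw1, one_mul]
    _ = ∑ e ∈ D, w e * mlin univ (fun X => c (insert e X)) z :=
        Finset.sum_congr rfl fun e he => by rw [key e he]

lemma monotoneFn_unionLeft {f : Finset α → ℝ} (hf : MonotoneFn f) (S : Finset α) :
    MonotoneFn fun X => f (S ∪ X) := fun _ _ h => hf (union_subset_union_right h)

lemma submodularFn_unionLeft {f : Finset α → ℝ} (hf : SubmodularFn f) (S : Finset α) :
    SubmodularFn fun X => f (S ∪ X) := by
  intro X Y hXY u huY
  by_cases hu : u ∈ S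
  · have h1 : S ∪ insert u Y = S ∪ Y := by
      rw [union_insert, insert_eq_self.mpr (mem_union_left Y hu)]
    have h2 : S ∪ insert u X = S ∪ X := by
      rw [union_insert, insert_eq_self.mpr (mem_union_left X hu)]
    simp only [h1, h2]
    simp
  · simp only [union_insert]
    exact hf (union_subset_union_right hXY) u (by simp [huY, hu])

lemma pertheta {f : Finset α → ℝ} (hf0 : ∀ X, 0 ≤ f X)
    (hmono : MonotoneFn f) (hsub : SubmodularFn f)
    {n m : ℕ} (hm : 0 < m) (hn : n = m ^ 2)
    (Y : Fin n → α → ℝ) (hY0 : ∀ i e, 0 ≤ Y i e) (hY1sum : ∀ e, ∑ i, Y i e ≤ 1) :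
    ((1 - (Real.exp 1)⁻¹) / (n : ℝ)) * ∑ i, mlin univ f (Y i)
      ≤ mlin univ f (fun e => ((m : ℝ))⁻¹ * ∑ i, Y i e) := by
  have hE0 : (0:ℝ) < Real.exp 1 := Real.exp_pos 1
  have hE3 : Real.exp 1 < 3 := lt_trans Real.exp_one_lt_d9 (by norm_num)
  have hEinv : (3:ℝ)⁻¹ < (Real.exp 1)⁻¹ := by
    exact inv_strictAnti₀ hE0 hE3
  have hEinv0 : (0:ℝ) < (Real.exp 1)⁻¹ := inv_pos.mpr hE0
  have hm0 : (0:ℝ) < (m:ℝ) := by exact_mod_cast hm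
  have hYe1 : ∀ i e, Y i e ≤ 1 := fun i e =>
    le_trans (Finset.single_le_sum (f := fun i' => Y i' e) (fun i' _ => hY0 i' e) (mem_univ i))
      (hY1sum e)
  set xs : α → ℝ := fun e => ((m : ℝ))⁻¹ * ∑ i, Y i e with hxs
  have hxs0 : ∀ e, 0 ≤ xs e := fun e =>
    mul_nonneg (by positivity) (Finset.sum_nonneg fun i _ => hY0 i e)
  have hxs1 : ∀ e, xs e ≤ 1 := by
    intro e
    have hm1' : (1:ℝ) ≤ (m:ℝ) := by exact_mod_cast hm
    have h1 : ((m:ℝ))⁻¹ ≤ 1 := by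
      rw [inv_le_one₀ hm0]; exact hm1'
    have := hY1sum e
    have h2 : (0:ℝ) ≤ ∑ i, Y i e := Finset.sum_nonneg fun i _ => hY0 i e
    calc xs e ≤ ((m:ℝ))⁻¹ * 1 := mul_le_mul_of_nonneg_left this (by positivity)
      _ ≤ 1 := by rw [mul_one]; exact h1
  have hV0 : (0:ℝ) ≤ ∑ i, mlin univ f (Y i) :=
    Finset.sum_nonneg fun i _ => mlin_nonneg hf0 (hY0 i) (hYe1 i)
  have hF0 : (0:ℝ) ≤ mlin univ f xs := mlin_nonneg hf0 hxs0 hxs1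
  by_cases hm2 : 2 ≤ m
  · -- main case
    have hA : ∑ e, xs e * mld f e xs ≤ mlin univ f xs := by
      have := L1lower_aux hsub (fun _ => 0) (fun _ => le_refl 0) univ xs hxs0
        (by simp) (fun u => by simpa using hxs1 u)
      have hzx : (fun u => (0:ℝ) + xs u) = xs := funext fun u => by ring
      rw [hzx] at this
      have h0 : mlin univ f (fun _ : α => (0:ℝ)) = f ∅ := mlin_eval_zero fun u _ => rfl
      rw [h0] at this
      linarith [hf0 ∅]
    have hB : ∀ i, mlin univ f (Y i) - mlin univ f xs ≤ ∑ e, Y i e * mld f e xs := by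
      intro i
      set vi : α → ℝ := fun e => max (xs e) (Y i e) - xs e with hvi
      have hvi0 : ∀ e, 0 ≤ vi e := fun e => by
        simp only [hvi, sub_nonneg, le_max_iff]; left; rfl
      have hviY : ∀ e, vi e ≤ Y i e := fun e => by
        simp only [hvi]
        have : max (xs e) (Y i e) ≤ xs e + Y i e := by
          apply max_le <;> nlinarith [hY0 i e, hxs0 e]
        linarith
      have hxsvi1 : ∀ u, xs u + vi u ≤ 1 := fun u => by
        simp only [hvi]
        have : max (xs u) (Y i u) ≤ 1 := max_le (hxs1 u) (hYe1 i u)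
        linarith
      have hup := L1upper_aux hsub xs hxs0 univ vi hvi0 (by simp) hxsvi1
      have hmaxeq : (fun u => xs u + vi u) = fun u => max (xs u) (Y i u) :=
        funext fun u => by simp only [hvi]; ring
      rw [hmaxeq] at hup
      have hYle : mlin univ f (Y i) ≤ mlin univ f (fun u => max (xs u) (Y i u)) := by
        refine mlin_mono_x (Y i) _ (hY0 i) (fun u => by
          have : max (xs u) (Y i u) ≤ 1 := max_le (hxs1 u) (hYe1 i u)
          exact this) (fun u => le_max_right _ _) univ f fun X Y' h _ => hmono h
      have hsum_le : ∑ e, vi e * mld f e xs ≤ ∑ e, Y i e * mld f e xs :=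
        Finset.sum_le_sum fun e _ =>
          mul_le_mul_of_nonneg_right (hviY e) (mld_nonneg hmono hxs0 hxs1)
      linarith
    have hswap : ∑ e, xs e * mld f e xs
        = ((m:ℝ))⁻¹ * ∑ i, ∑ e, Y i e * mld f e xs := by
      have h1 : ∀ e, xs e * mld f e xs = ((m:ℝ))⁻¹ * ∑ i, Y i e * mld f e xs := by
        intro e
        simp only [hxs]
        rw [mul_assoc, Finset.sum_mul]
      calc ∑ e, xs e * mld f e xs
          = ∑ e, ((m:ℝ))⁻¹ * ∑ i, Y i e * mld f e xs :=
            Finset.sum_congr rfl fun e _ => h1 e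
        _ = ((m:ℝ))⁻¹ * ∑ e, ∑ i, Y i e * mld f e xs := (Finset.mul_sum _ _ _).symm
        _ = ((m:ℝ))⁻¹ * ∑ i, ∑ e, Y i e * mld f e xs := by rw [Finset.sum_comm]
    have hBsum : ∑ i, (mlin univ f (Y i) - mlin univ f xs) ≤ ∑ i, ∑ e, Y i e * mld f e xs :=
      Finset.sum_le_sum fun i _ => hB i
    have hcard : ∑ i : Fin n, (mlin univ f (Y i) - mlin univ f xs)
        = (∑ i, mlin univ f (Y i)) - (n:ℝ) * mlin univ f xs := by
      rw [Finset.sum_sub_distrib, Finset.sum_const, card_univ, Fintype.card_fin]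
      ring
    -- V ≤ (n+m) F*
    have hkey : ∑ i, mlin univ f (Y i) ≤ ((n:ℝ) + m) * mlin univ f xs := by
      have h1 : ∑ i, ∑ e, Y i e * mld f e xs = (m:ℝ) * ∑ e, xs e * mld f e xs := by
        rw [hswap]; field_simp
      have h2 : (m:ℝ) * ∑ e, xs e * mld f e xs ≤ (m:ℝ) * mlin univ f xs :=
        mul_le_mul_of_nonneg_left hA (le_of_lt hm0)
      have := hBsum
      rw [hcard, h1] at this
      nlinarith
    have hn0 : (0:ℝ) < (n:ℝ) := by
      have : 0 < n := by rw [hn]; positivity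
      exact_mod_cast this
    have hnm0 : (0:ℝ) < (n:ℝ) + m := by linarith
    have hcoef : (1 - (Real.exp 1)⁻¹) / (n:ℝ) ≤ 1 / ((n:ℝ) + m) := by
      rw [div_le_div_iff₀ hn0 hnm0]
      have hM2 : (2:ℝ) ≤ (m:ℝ) := by exact_mod_cast hm2
      have hncast : (n:ℝ) = (m:ℝ) * (m:ℝ) := by
        rw [hn]; push_cast; ring
      rw [hncast]
      nlinarith
    calc ((1 - (Real.exp 1)⁻¹) / (n : ℝ)) * ∑ i, mlin univ f (Y i)
        ≤ (1 / ((n:ℝ) + m)) * ∑ i, mlin univ f (Y i) :=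
          mul_le_mul_of_nonneg_right hcoef hV0
      _ ≤ mlin univ f xs := by
          rw [one_div, inv_mul_le_iff₀ hnm0]
          linarith [hkey]
  · -- m = 1
    have hm1 : m = 1 := by omega
    have hn1 : n = 1 := by simp [hn, hm1]
    subst hn1
    have hxseq : xs = Y 0 := by
      funext e
      simp only [hxs, hm1]
      rw [Fin.sum_univ_one]
      norm_num
    rw [hxseq, Fin.sum_univ_one]
    have hF0' : (0:ℝ) ≤ mlin univ f (Y 0) := mlin_nonneg hf0 (hY0 0) (hYe1 0)
    have : (1 - (Real.exp 1)⁻¹) / (1:ℕ) ≤ 1 := by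
      push_cast; nlinarith
    nlinarith
end ML

open scoped Classical

/-- In a Bayesian game with submodular social welfare with `n = m²`
players, fix for each type profile `θ` an optimal action profile `aopt θ`.  For each
player `i` and type `tᵢ`, let `w i tᵢ aᵢ` be the conditional probability (given `θ i = tᵢ`,
expressed as a ratio of ρ-weighted sums) that the optimal profile assigns action `aᵢ` to
player `i`, and let `y i tᵢ ∈ [0,1]^E` equal `√n · w i tᵢ e` on those `e ∈ A_i^{tᵢ}` with
`w i tᵢ e ≤ 1/√n`, and `0` elsewhere.  Then, with `F` the multilinear extension of `f`,
`STR ≥ ((1 − 1/e)/n) · ∑_i E_{θ∼ρ}[F (y i (θ i))]`. -/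
theorem str_ge_multilinear_lower_bound
    {m n : ℕ} (hm : 0 < m) (hn : n = m ^ 2)
    {Θ : Fin n → Type*} [∀ i, Fintype (Θ i)] [∀ i, DecidableEq (Θ i)]
    [∀ i, Nonempty (Θ i)]
    {E : Type*} [Fintype E] [DecidableEq E]
    (Act : ∀ i, Θ i → Finset E) (hAne : ∀ i t, (Act i t).Nonempty)
    (hdisj : ∀ p q : Σ i : Fin n, Θ i, p ≠ q → Disjoint (Act p.1 p.2) (Act q.1 q.2))
    (ρ : (∀ i, Θ i) → ℝ) (hρ0 : ∀ θ, 0 ≤ ρ θ) (hρ1 : ∑ θ, ρ θ = 1)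
    (f : Finset E → ℝ) (hf0 : ∀ X, 0 ≤ f X)
    (hmono : MonotoneFn f) (hsub : SubmodularFn f)
    (aopt : (∀ i, Θ i) → (Fin n → E))
    (haopt_mem : ∀ θ i, aopt θ i ∈ Act i (θ i))
    (haopt_max : ∀ θ, ∀ a ∈ Fintype.piFinset (fun i => Act i (θ i)),
        f (Finset.univ.image a) ≤ f (Finset.univ.image (aopt θ)))
    (w : ∀ i, Θ i → E → ℝ)
    (hw : ∀ i tᵢ e, w i tᵢ e =
      (∑ θ, if θ i = tᵢ ∧ aopt θ i = e then ρ θ else 0) /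
        (∑ θ, if θ i = tᵢ then ρ θ else 0))
    (y : ∀ i, Θ i → E → ℝ)
    (hy : ∀ i tᵢ e, y i tᵢ e =
      if e ∈ Act i tᵢ ∧ w i tᵢ e ≤ 1 / (m : ℝ) then (m : ℝ) * w i tᵢ e else 0) :
    ((1 - (Real.exp 1)⁻¹) / (n : ℝ)) * ∑ i, ∑ θ, ρ θ * mlext f (y i (θ i))
      ≤ gSTR Act hAne ρ f := by
  have hm0 : (0:ℝ) < (m:ℝ) := by exact_mod_cast hm
  -- basic facts about w
  have hden0 : ∀ (i : Fin n) (t : Θ i), 0 ≤ ∑ θ, if θ i = t then ρ θ else 0 :=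
    fun i t => Finset.sum_nonneg fun θ _ => by split <;> simp [hρ0 θ]
  have hnum0 : ∀ (i : Fin n) (t : Θ i) (e : E),
      0 ≤ ∑ θ, if θ i = t ∧ aopt θ i = e then ρ θ else 0 :=
    fun i t e => Finset.sum_nonneg fun θ _ => by split <;> simp [hρ0 θ]
  have hw0 : ∀ (i : Fin n) (t : Θ i) (e : E), 0 ≤ w i t e := fun i t e => by
    rw [hw]; exact div_nonneg (hnum0 i t e) (hden0 i t)
  have hwsupp : ∀ (i : Fin n) (t : Θ i) (e : E), e ∉ Act i t → w i t e = 0 := by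
    intro i t e he
    rw [hw]
    have hz : (∑ θ, if θ i = t ∧ aopt θ i = e then ρ θ else 0) = 0 := by
      refine Finset.sum_eq_zero fun θ _ => ?_
      rw [if_neg]
      rintro ⟨h1, h2⟩
      exact he (by rw [← h2, ← h1]; exact haopt_mem θ i)
    rw [hz, zero_div]
  have hnumsum : ∀ (i : Fin n) (t : Θ i),
      ∑ e ∈ Act i t, (∑ θ, if θ i = t ∧ aopt θ i = e then ρ θ else 0)
        = ∑ θ, if θ i = t then ρ θ else 0 := by
    intro i t
    rw [Finset.sum_comm]
    refine Fintype.sum_congr _ _ fun θ => ?_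
    by_cases hθ : θ i = t
    · have hrw : ∀ e, (if θ i = t ∧ aopt θ i = e then ρ θ else 0)
          = (if aopt θ i = e then ρ θ else 0) := fun e => by
        by_cases h2 : aopt θ i = e <;> simp [hθ, h2]
      rw [Finset.sum_congr rfl fun e _ => hrw e,
        Finset.sum_ite_eq (Act i t) (aopt θ i) fun _ => ρ θ,
        if_pos (hθ ▸ haopt_mem θ i), if_pos hθ]
    · have hrw : ∀ e, (if θ i = t ∧ aopt θ i = e then ρ θ else 0) = 0 :=
        fun e => by simp [hθ]
      rw [if_neg hθ]
      exact Finset.sum_eq_zero fun e _ => hrw e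
  have hwsum_div : ∀ (i : Fin n) (t : Θ i), ∑ e ∈ Act i t, w i t e
      = (∑ θ, if θ i = t then ρ θ else 0) / (∑ θ, if θ i = t then ρ θ else 0) := by
    intro i t
    rw [Finset.sum_congr rfl fun e _ => hw i t e, ← Finset.sum_div, hnumsum]
  have hwsum_le : ∀ (i : Fin n) (t : Θ i), ∑ e ∈ Act i t, w i t e ≤ 1 := by
    intro i t
    rw [hwsum_div]
    rcases eq_or_lt_of_le (hden0 i t) with h | h
    · rw [← h]; norm_num
    · rw [div_self (ne_of_gt h)]
  have hwsum_eq : ∀ (i : Fin n) (t : Θ i), 0 < (∑ θ, if θ i = t then ρ θ else 0) →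
      ∑ e ∈ Act i t, w i t e = 1 := by
    intro i t h
    rw [hwsum_div, div_self (ne_of_gt h)]
  have hw_le1 : ∀ (i : Fin n) (t : Θ i) (e : E), w i t e ≤ 1 := by
    intro i t e
    by_cases he : e ∈ Act i t
    · exact le_trans (Finset.single_le_sum (f := fun e' => w i t e')
        (fun e' _ => hw0 i t e') he) (hwsum_le i t)
    · rw [hwsupp i t e he]; norm_num
  -- facts about y
  have hy0 : ∀ (i : Fin n) (t : Θ i) (e : E), 0 ≤ y i t e := by
    intro i t e; rw [hy]; split
    · exact mul_nonneg (le_of_lt hm0) (hw0 i t e)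
    · exact le_refl 0
  have hy1 : ∀ (i : Fin n) (t : Θ i) (e : E), y i t e ≤ 1 := by
    intro i t e; rw [hy]; split
    · rename_i h
      calc (m:ℝ) * w i t e ≤ (m:ℝ) * (1/(m:ℝ)) :=
            mul_le_mul_of_nonneg_left h.2 (le_of_lt hm0)
        _ = 1 := by field_simp
    · norm_num
  have hysupp : ∀ (i : Fin n) (t : Θ i) (e : E), e ∉ Act i t → y i t e = 0 := by
    intro i t e he; rw [hy, if_neg]
    rintro ⟨h1, _⟩; exact he h1
  have hyw : ∀ (i : Fin n) (t : Θ i) (e : E), ((m:ℝ))⁻¹ * y i t e ≤ w i t e := by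
    intro i t e; rw [hy]; split
    · rw [← mul_assoc, inv_mul_cancel₀ (ne_of_gt hm0), one_mul]
    · rw [mul_zero]; exact hw0 i t e
  -- disjointness
  have hActd : ∀ (θ : ∀ i, Θ i) (i j : Fin n), i ≠ j → ∀ e, e ∈ Act i (θ i) → e ∉ Act j (θ j) := by
    intro θ i j hij e hei hej
    have hne : (⟨i, θ i⟩ : Σ i, Θ i) ≠ ⟨j, θ j⟩ := fun h => hij (congrArg Sigma.fst h)
    exact (Finset.disjoint_left.mp (hdisj _ _ hne)) hei hej
  have hdisjsum : ∀ (V : ∀ i : Fin n, Θ i → E → ℝ), (∀ i t e, 0 ≤ V i t e) →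
      (∀ i t e, e ∉ Act i t → V i t e = 0) → (∀ i t e, V i t e ≤ 1) →
      ∀ (θ : ∀ i, Θ i) (S : Finset (Fin n)) (e : E), ∑ i ∈ S, V i (θ i) e ≤ 1 := by
    intro V hV0 hVsupp hV1 θ S e
    by_cases hex : ∃ i ∈ S, e ∈ Act i (θ i)
    · obtain ⟨i₀, hi₀S, hi₀⟩ := hex
      rw [← Finset.sum_erase_add S _ hi₀S]
      have hz : ∑ i ∈ S.erase i₀, V i (θ i) e = 0 :=
        Finset.sum_eq_zero fun i hi =>
          hVsupp i (θ i) e (hActd θ i₀ i (fun h => (Finset.mem_erase.mp hi).1 h.symm) e hi₀)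
      rw [hz, zero_add]; exact hV1 i₀ (θ i₀) e
    · push_neg at hex
      rw [Finset.sum_eq_zero fun i hi => hVsupp i (θ i) e (hex i hi)]
      norm_num
  have hzS0 : ∀ (θ : ∀ i, Θ i) (S : Finset (Fin n)) (e : E), 0 ≤ ∑ i ∈ S, w i (θ i) e :=
    fun θ S e => Finset.sum_nonneg fun i _ => hw0 i (θ i) e
  have hzS1 : ∀ (θ : ∀ i, Θ i) (S : Finset (Fin n)) (e : E), ∑ i ∈ S, w i (θ i) e ≤ 1 :=
    hdisjsum w hw0 hwsupp hw_le1
  -- MAIN per-θ inequality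
  have hmain : ((1 - (Real.exp 1)⁻¹) / (n : ℝ)) * ∑ i, ∑ θ, ρ θ * mlext f (y i (θ i))
      ≤ ∑ θ, ρ θ * mlin univ f (fun e => ∑ i, w i (θ i) e) := by
    rw [Finset.sum_comm, Finset.mul_sum]
    refine Finset.sum_le_sum fun θ _ => ?_
    have h1 : (((1 - (Real.exp 1)⁻¹)/(n:ℝ)) * ∑ i, ρ θ * mlext f (y i (θ i)))
        = ρ θ * (((1 - (Real.exp 1)⁻¹)/(n:ℝ)) * ∑ i, mlin univ f (y i (θ i))) := by
      calc ((1 - (Real.exp 1)⁻¹)/(n:ℝ)) * ∑ i, ρ θ * mlext f (y i (θ i))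
          = ∑ i, ρ θ * (((1 - (Real.exp 1)⁻¹)/(n:ℝ)) * mlin univ f (y i (θ i))) := by
            rw [Finset.mul_sum]
            exact Finset.sum_congr rfl fun i _ => by rw [mlext_eq_mlin]; ring
        _ = ρ θ * (((1 - (Real.exp 1)⁻¹)/(n:ℝ)) * ∑ i, mlin univ f (y i (θ i))) := by
            rw [Finset.mul_sum, Finset.mul_sum]
    rw [h1]
    refine mul_le_mul_of_nonneg_left ?_ (hρ0 θ)
    have hper := pertheta hf0 hmono hsub hm hn (fun i => y i (θ i))
      (fun i e => hy0 i (θ i) e)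
      (fun e => hdisjsum y hy0 hysupp hy1 θ univ e)
    refine le_trans hper ?_
    refine mlin_mono_x _ _
      (fun e => mul_nonneg (by positivity) (Finset.sum_nonneg fun i _ => hy0 i (θ i) e))
      (fun e => hzS1 θ univ e) (fun e => ?_) univ f (fun X Y hXY _ => hmono hXY)
    rw [Finset.mul_sum]
    exact Finset.sum_le_sum fun i _ => hyw i (θ i) e
  -- derandomization induction
  have IND : ∀ T : Finset (Fin n), ∃ s : ∀ i, Θ i → E, (∀ i t, s i t ∈ Act i t) ∧
      (∑ θ, ρ θ * mlin univ f (fun e => ∑ i, w i (θ i) e)) ≤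
      ∑ θ, ρ θ * mlin univ (fun X => f ((T.image fun i => s i (θ i)) ∪ X))
        (fun e => ∑ i ∈ Tᶜ, w i (θ i) e) := by
    intro T
    induction T using Finset.induction_on with
    | empty =>
      refine ⟨fun i t => (hAne i t).choose, fun i t => (hAne i t).choose_spec, le_of_eq ?_⟩
      refine Finset.sum_congr rfl fun θ _ => ?_
      simp only [Finset.image_empty, Finset.empty_union, Finset.compl_empty]
    | @insert j T hjT ih =>
      obtain ⟨s, hsmem, hsle⟩ := ih
      have hjc : j ∈ Tᶜ := Finset.mem_compl.mpr hjT
      have hzdec : ∀ (θ : ∀ i, Θ i) (e : E), (∑ i ∈ Tᶜ, w i (θ i) e)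
          = (∑ i ∈ (insert j T)ᶜ, w i (θ i) e) + w j (θ j) e := by
        intro θ e
        rw [Finset.compl_insert]
        exact (Finset.sum_erase_add Tᶜ _ hjc).symm
      have hz'0 : ∀ (θ : ∀ i, Θ i) (e : E), 0 ≤ ∑ i ∈ (insert j T)ᶜ, w i (θ i) e :=
        fun θ e => hzS0 θ _ e
      have hz'1 : ∀ (θ : ∀ i, Θ i) (e : E), (∑ i ∈ (insert j T)ᶜ, w i (θ i) e) ≤ 1 :=
        fun θ e => hzS1 θ _ e
      -- step 1 : per-θ mixing
      have hstep1 : ∀ θ : ∀ i, Θ i,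
          ρ θ * mlin univ (fun X => f ((T.image fun i => s i (θ i)) ∪ X))
            (fun e => ∑ i ∈ Tᶜ, w i (θ i) e)
          ≤ ρ θ * ∑ e ∈ Act j (θ j), w j (θ j) e *
              mlin univ (fun X => f (insert e (T.image fun i => s i (θ i)) ∪ X))
                (fun e' => ∑ i ∈ (insert j T)ᶜ, w i (θ i) e') := by
        intro θ
        rcases eq_or_lt_of_le (hρ0 θ) with h0 | hpos
        · rw [← h0]; simp
        · refine mul_le_mul_of_nonneg_left ?_ (le_of_lt hpos)
          have hrw : (fun e => ∑ i ∈ Tᶜ, w i (θ i) e)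
              = fun e => (∑ i ∈ (insert j T)ᶜ, w i (θ i) e) + w j (θ j) e :=
            funext fun e => hzdec θ e
          rw [hrw]
          have hden_pos : 0 < ∑ θ', if θ' j = θ j then ρ θ' else 0 := by
            have h2 : ρ θ ≤ ∑ θ', if θ' j = θ j then ρ θ' else 0 := by
              have h3 := Finset.single_le_sum
                (f := fun θ' => if θ' j = θ j then ρ θ' else 0)
                (fun θ' _ => by by_cases h : θ' j = θ j <;> simp [h, hρ0 θ']) (mem_univ θ)
              simpa using h3
            linarith
          have hzD : ∀ e ∈ Act j (θ j), (∑ i ∈ (insert j T)ᶜ, w i (θ i) e) = 0 := by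
            intro e he
            refine Finset.sum_eq_zero fun i hi => ?_
            have hij : i ≠ j := fun h =>
              (Finset.mem_compl.mp hi) (h ▸ Finset.mem_insert_self j T)
            exact hwsupp i (θ i) e (hActd θ j i (fun h => hij h.symm) e he)
          have hsm := star_mix (submodularFn_unionLeft hsub (T.image fun i => s i (θ i)))
            (Act j (θ j)) (w j (θ j)) (fun e => ∑ i ∈ (insert j T)ᶜ, w i (θ i) e)
            (hw0 j (θ j)) (hwsupp j (θ j)) (hwsum_eq j (θ j) hden_pos)
            (hz'0 θ) hzD
            (fun e => by rw [← hzdec θ e]; exact hzS1 θ Tᶜ e)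
          refine le_trans hsm (le_of_eq (Finset.sum_congr rfl fun e he => ?_))
          have harg : (fun X => f ((T.image fun i => s i (θ i)) ∪ insert e X))
              = fun X => f (insert e (T.image fun i => s i (θ i)) ∪ X) := by
            funext X
            rw [Finset.union_insert, Finset.insert_union]
          rw [harg]
      -- step 2 : choose the maximizer per type of player j
      have hchoice : ∀ t : Θ j, ∃ e ∈ Act j t, ∀ e' ∈ Act j t,
          (∑ θ ∈ univ.filter fun θ' => θ' j = t, ρ θ *
            mlin univ (fun X => f (insert e' (T.image fun i => s i (θ i)) ∪ X))
              (fun e'' => ∑ i ∈ (insert j T)ᶜ, w i (θ i) e''))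
          ≤ ∑ θ ∈ univ.filter fun θ' => θ' j = t, ρ θ *
            mlin univ (fun X => f (insert e (T.image fun i => s i (θ i)) ∪ X))
              (fun e'' => ∑ i ∈ (insert j T)ᶜ, w i (θ i) e'') :=
        fun t => Finset.exists_max_image _ _ (hAne j t)
      choose cf hcfmem hcfmax using hchoice
      have hΦ0 : ∀ (θ : ∀ i, Θ i) (e : E), 0 ≤ ρ θ *
          mlin univ (fun X => f (insert e (T.image fun i => s i (θ i)) ∪ X))
            (fun e'' => ∑ i ∈ (insert j T)ᶜ, w i (θ i) e'') :=
        fun θ e => mul_nonneg (hρ0 θ) (mlin_nonneg (fun X => hf0 _) (hz'0 θ) (hz'1 θ))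
      have hstep2 : (∑ θ, ρ θ * ∑ e ∈ Act j (θ j), w j (θ j) e *
            mlin univ (fun X => f (insert e (T.image fun i => s i (θ i)) ∪ X))
              (fun e' => ∑ i ∈ (insert j T)ᶜ, w i (θ i) e'))
          ≤ ∑ θ, ρ θ *
            mlin univ (fun X => f (insert (cf (θ j)) (T.image fun i => s i (θ i)) ∪ X))
              (fun e' => ∑ i ∈ (insert j T)ᶜ, w i (θ i) e') := by
        rw [← Finset.sum_fiberwise_of_maps_to (fun θ _ => mem_univ (θ j))
            (fun θ => ρ θ * ∑ e ∈ Act j (θ j), w j (θ j) e *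
              mlin univ (fun X => f (insert e (T.image fun i => s i (θ i)) ∪ X))
                (fun e' => ∑ i ∈ (insert j T)ᶜ, w i (θ i) e')),
          ← Finset.sum_fiberwise_of_maps_to (fun θ _ => mem_univ (θ j))
            (fun θ => ρ θ *
              mlin univ (fun X => f (insert (cf (θ j)) (T.image fun i => s i (θ i)) ∪ X))
                (fun e' => ∑ i ∈ (insert j T)ᶜ, w i (θ i) e'))]
        refine Finset.sum_le_sum fun t _ => ?_
        have hQ0 : 0 ≤ ∑ θ ∈ univ.filter fun θ' => θ' j = t, ρ θ *
            mlin univ (fun X => f (insert (cf t) (T.image fun i => s i (θ i)) ∪ X))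
              (fun e'' => ∑ i ∈ (insert j T)ᶜ, w i (θ i) e'') :=
          Finset.sum_nonneg fun θ _ => hΦ0 θ (cf t)
        calc ∑ θ ∈ univ.filter fun θ' => θ' j = t, ρ θ * ∑ e ∈ Act j (θ j), w j (θ j) e *
              mlin univ (fun X => f (insert e (T.image fun i => s i (θ i)) ∪ X))
                (fun e' => ∑ i ∈ (insert j T)ᶜ, w i (θ i) e')
            = ∑ θ ∈ univ.filter fun θ' => θ' j = t, ∑ e ∈ Act j t, w j t e * (ρ θ *
              mlin univ (fun X => f (insert e (T.image fun i => s i (θ i)) ∪ X))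
                (fun e' => ∑ i ∈ (insert j T)ᶜ, w i (θ i) e')) := by
              refine Finset.sum_congr rfl fun θ hθ => ?_
              rw [(Finset.mem_filter.mp hθ).2, Finset.mul_sum]
              exact Finset.sum_congr rfl fun e _ => by ring
          _ = ∑ e ∈ Act j t, w j t e * ∑ θ ∈ univ.filter fun θ' => θ' j = t, ρ θ *
              mlin univ (fun X => f (insert e (T.image fun i => s i (θ i)) ∪ X))
                (fun e' => ∑ i ∈ (insert j T)ᶜ, w i (θ i) e') := by
              rw [Finset.sum_comm]
              exact Finset.sum_congr rfl fun e _ => by rw [Finset.mul_sum]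
          _ ≤ ∑ e ∈ Act j t, w j t e * ∑ θ ∈ univ.filter fun θ' => θ' j = t, ρ θ *
              mlin univ (fun X => f (insert (cf t) (T.image fun i => s i (θ i)) ∪ X))
                (fun e' => ∑ i ∈ (insert j T)ᶜ, w i (θ i) e') :=
              Finset.sum_le_sum fun e he =>
                mul_le_mul_of_nonneg_left (hcfmax t e he) (hw0 j t e)
          _ = (∑ e ∈ Act j t, w j t e) * ∑ θ ∈ univ.filter fun θ' => θ' j = t, ρ θ *
              mlin univ (fun X => f (insert (cf t) (T.image fun i => s i (θ i)) ∪ X))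
                (fun e' => ∑ i ∈ (insert j T)ᶜ, w i (θ i) e') := (Finset.sum_mul _ _ _).symm
          _ ≤ 1 * ∑ θ ∈ univ.filter fun θ' => θ' j = t, ρ θ *
              mlin univ (fun X => f (insert (cf t) (T.image fun i => s i (θ i)) ∪ X))
                (fun e' => ∑ i ∈ (insert j T)ᶜ, w i (θ i) e') :=
              mul_le_mul_of_nonneg_right (hwsum_le j t) hQ0
          _ = ∑ θ ∈ univ.filter fun θ' => θ' j = t, ρ θ *
              mlin univ (fun X => f (insert (cf (θ j)) (T.image fun i => s i (θ i)) ∪ X))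
                (fun e' => ∑ i ∈ (insert j T)ᶜ, w i (θ i) e') := by
              rw [one_mul]
              exact Finset.sum_congr rfl fun θ hθ => by
                rw [(Finset.mem_filter.mp hθ).2]
      -- assemble the new strategy
      refine ⟨Function.update s j cf, ?_, ?_⟩
      · intro i t
        by_cases h : i = j
        · subst h; rw [Function.update_self]; exact hcfmem t
        · rw [Function.update_of_ne h]; exact hsmem i t
      · have hfinal : ∀ θ : ∀ i, Θ i,
            ρ θ * mlin univ (fun X => f (insert (cf (θ j)) (T.image fun i => s i (θ i)) ∪ X))
              (fun e' => ∑ i ∈ (insert j T)ᶜ, w i (θ i) e')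
            = ρ θ * mlin univ
              (fun X => f (((insert j T).image fun i => Function.update s j cf i (θ i)) ∪ X))
              (fun e' => ∑ i ∈ (insert j T)ᶜ, w i (θ i) e') := by
          intro θ
          have himg : ((insert j T).image fun i => Function.update s j cf i (θ i))
              = insert (cf (θ j)) (T.image fun i => s i (θ i)) := by
            rw [Finset.image_insert]
            congr 1
            · rw [Function.update_self]
            · refine Finset.image_congr fun i hi => ?_
              rw [Function.update_of_ne
                (fun h => hjT (by rw [← h]; exact Finset.mem_coe.mp hi))]
          rw [himg]
        calc ∑ θ, ρ θ * mlin univ f (fun e => ∑ i, w i (θ i) e)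
            ≤ ∑ θ, ρ θ * mlin univ (fun X => f ((T.image fun i => s i (θ i)) ∪ X))
                (fun e => ∑ i ∈ Tᶜ, w i (θ i) e) := hsle
          _ ≤ ∑ θ, ρ θ * ∑ e ∈ Act j (θ j), w j (θ j) e *
                mlin univ (fun X => f (insert e (T.image fun i => s i (θ i)) ∪ X))
                  (fun e' => ∑ i ∈ (insert j T)ᶜ, w i (θ i) e') :=
              Finset.sum_le_sum fun θ _ => hstep1 θ
          _ ≤ ∑ θ, ρ θ *
                mlin univ (fun X => f (insert (cf (θ j)) (T.image fun i => s i (θ i)) ∪ X))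
                  (fun e' => ∑ i ∈ (insert j T)ᶜ, w i (θ i) e') := hstep2
          _ = ∑ θ, ρ θ * mlin univ
                (fun X => f (((insert j T).image fun i => Function.update s j cf i (θ i)) ∪ X))
                (fun e' => ∑ i ∈ (insert j T)ᶜ, w i (θ i) e') :=
              Finset.sum_congr rfl fun θ _ => hfinal θ
  -- conclude
  obtain ⟨s, hsmem, hsle⟩ := IND univ
  have hsmem' : s ∈ Fintype.piFinset (fun i => Fintype.piFinset fun t : Θ i => Act i t) := by
    rw [Fintype.mem_piFinset]
    intro i
    rw [Fintype.mem_piFinset]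
    intro t
    exact hsmem i t
  have hfin : (∑ θ, ρ θ * mlin univ (fun X => f (((univ : Finset (Fin n)).image fun i => s i (θ i)) ∪ X))
        (fun e => ∑ i ∈ (univ : Finset (Fin n))ᶜ, w i (θ i) e))
      = ∑ θ, ρ θ * f (univ.image fun i => s i (θ i)) := by
    refine Finset.sum_congr rfl fun θ _ => ?_
    congr 1
    have h1 : (fun e => ∑ i ∈ (univ : Finset (Fin n))ᶜ, w i (θ i) e) = fun _ : E => (0:ℝ) := by
      funext e; rw [Finset.compl_univ]; simp
    rw [h1, mlin_eval_zero fun u _ => rfl, Finset.union_empty]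
  have hstr : (∑ θ, ρ θ * f (univ.image fun i => s i (θ i))) ≤ gSTR Act hAne ρ f :=
    Finset.le_sup' (fun s' => ∑ θ : ∀ i, Θ i, ρ θ * f (Finset.univ.image fun i => s' i (θ i)))
      hsmem'
  calc ((1 - (Real.exp 1)⁻¹) / (n : ℝ)) * ∑ i, ∑ θ, ρ θ * mlext f (y i (θ i))
      ≤ ∑ θ, ρ θ * mlin univ f (fun e => ∑ i, w i (θ i) e) := hmain
    _ ≤ _ := hsle
    _ = ∑ θ, ρ θ * f (univ.image fun i => s i (θ i)) := hfin
    _ ≤ gSTR Act hAne ρ f := hstr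
end

section
/- In any Bayesian valid utility game, every strategic-form coarse Bayesian solution π satisfies E_{θ∼ρ}[E_{a∼π(θ)}[SW(a)]] ≥ (1/2) · STR, i.e., the expected social welfare of π is at least half the expected social welfare of an optimal strategy profile. -/
open Finset

/-- Auxiliary: swap a triple sum, bringing the innermost index outside. -/
lemma sum_swap3_aux {α β γ : Type*} [Fintype α] [Fintype β] [Fintype γ]
    (g : α → β → γ → ℝ) :
    ∑ a : α, ∑ b : β, ∑ c : γ, g a b c = ∑ c : γ, ∑ a : α, ∑ b : β, g a b c := by
  rw [show (∑ a : α, ∑ b : β, ∑ c : γ, g a b c) = ∑ a : α, ∑ c : γ, ∑ b : β, g a b c from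
    Finset.sum_congr rfl fun a _ => Finset.sum_comm, Finset.sum_comm]

/-- Auxiliary telescoping lemma abstracting the submodularity argument. -/
lemma submod_key_aux {α ι : Type*} [DecidableEq α] [DecidableEq ι] {f : Finset α → ℝ}
    (t : ι → α) (m : ι → ℝ) (D : ι → Finset α)
    (hm : ∀ i, 0 ≤ m i)
    (H : ∀ i (X : Finset α), D i ⊆ X → t i ∉ X → f (insert (t i) X) - f X ≤ m i) :
    ∀ (I : Finset ι) (S : Finset α), (∀ i ∈ I, D i ⊆ S) →
      f (S ∪ I.image t) - f S ≤ ∑ i ∈ I, m i := by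
  intro I
  induction I using Finset.induction_on with
  | empty => intro S _; simp
  | @insert j I hj ih =>
    intro S hS
    have hDj : D j ⊆ S := hS j (mem_insert_self j I)
    have hstep : f (insert (t j) S) - f S ≤ m j := by
      by_cases h : t j ∈ S
      · rw [insert_eq_self.mpr h]; simpa using hm j
      · exact H j S hDj h
    have hih : f (insert (t j) S ∪ I.image t) - f (insert (t j) S) ≤ ∑ i ∈ I, m i := by
      apply ih
      intro i hi
      exact (hS i (mem_insert_of_mem hi)).trans (subset_insert _ _)
    have hset : S ∪ (insert j I).image t = insert (t j) S ∪ I.image t := by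
      rw [image_insert]
      ext x
      simp only [mem_union, mem_insert]
      tauto
    rw [hset, sum_insert hj]
    linarith

/-- In any Bayesian valid utility game, every strategic-form coarse
Bayesian solution `π` satisfies
`E_{θ∼ρ}[E_{a∼π θ}[SW a]] ≥ (1/2) · STR`,
where `STR` is the expected social welfare of an optimal strategy profile. -/
theorem sfcbs_welfare_ge_half_str
    {n : ℕ} {Θ : Fin n → Type*} [∀ i, Fintype (Θ i)] [∀ i, DecidableEq (Θ i)]
    [∀ i, Nonempty (Θ i)]
    {E : Type*} [Fintype E] [DecidableEq E]
    (Act : ∀ i, Θ i → Finset E) (hAne : ∀ i t, (Act i t).Nonempty)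
    (hdisj : ∀ p q : Σ i : Fin n, Θ i, p ≠ q → Disjoint (Act p.1 p.2) (Act q.1 q.2))
    (ρ : (∀ i, Θ i) → ℝ) (hρ0 : ∀ θ, 0 ≤ ρ θ) (hρ1 : ∑ θ, ρ θ = 1)
    (f : Finset E → ℝ) (hf0 : ∀ X, 0 ≤ f X)
    (hmono : MonotoneFn f) (hsub : SubmodularFn f)
    -- valid utility game: utilities, total utility and marginal contribution conditions
    (v : Fin n → (Fin n → E) → ℝ) (hv0 : ∀ i a, 0 ≤ v i a)
    (htotal : ∀ a : Fin n → E, (∀ i, ∃ t, a i ∈ Act i t) →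
      ∑ i, v i a ≤ f (Finset.univ.image a))
    (hmarg : ∀ a : Fin n → E, (∀ i, ∃ t, a i ∈ Act i t) → ∀ i,
      f (Finset.univ.image a) - f ((Finset.univ.image a).erase (a i)) ≤ v i a)
    -- π is a type-dependent distribution supported on A^θ
    (π : (∀ i, Θ i) → (Fin n → E) → ℝ)
    (hπ0 : ∀ θ a, 0 ≤ π θ a) (hπ1 : ∀ θ, ∑ a, π θ a = 1)
    (hπsupp : ∀ θ a, π θ a ≠ 0 → ∀ i, a i ∈ Act i (θ i))
    -- π is a strategic-form coarse Bayesian solution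
    (hSFCBS : ∀ i : Fin n, ∀ sᵢ : Θ i → E, (∀ t, sᵢ t ∈ Act i t) →
      ∑ θ, ρ θ * ∑ a, π θ a * v i (Function.update a i (sᵢ (θ i)))
        ≤ ∑ θ, ρ θ * ∑ a, π θ a * v i a) :
    (1 / 2) * gSTR Act hAne ρ f
      ≤ ∑ θ, ρ θ * ∑ a, π θ a * f (Finset.univ.image a) := by
  classical
  -- the optimal strategy profile
  obtain ⟨s, hsmem, hseq⟩ := Finset.exists_mem_eq_sup'
    (Fintype.piFinset_nonempty.mpr fun i => Fintype.piFinset_nonempty.mpr fun t => hAne i t)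
    (fun s : ∀ i, Θ i → E => ∑ θ : ∀ i, Θ i, ρ θ * f (Finset.univ.image fun i => s i (θ i)))
  have hsAct : ∀ i t, s i t ∈ Act i t := by
    intro i t
    exact Fintype.mem_piFinset.mp (Fintype.mem_piFinset.mp hsmem i) t
  have hSTR : gSTR Act hAne ρ f
      = ∑ θ : ∀ i, Θ i, ρ θ * f (Finset.univ.image fun i => s i (θ i)) := hseq
  -- pointwise key bound for each type profile and supported action profile
  have keyB : ∀ (θ : ∀ i, Θ i) (a : Fin n → E), (∀ i, a i ∈ Act i (θ i)) →
      f (Finset.univ.image fun i => s i (θ i)) - f (Finset.univ.image a)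
        ≤ ∑ i, v i (Function.update a i (s i (θ i))) := by
    intro θ a ha
    have hb : ∀ i j, (Function.update a i (s i (θ i))) j ∈ Act j (θ j) := by
      intro i j
      rcases eq_or_ne j i with rfl | hne
      · simpa using hsAct j (θ j)
      · simpa [Function.update_of_ne hne] using ha j
    have htiB : ∀ i, s i (θ i) ∈ Finset.univ.image (Function.update a i (s i (θ i))) := by
      intro i
      exact Finset.mem_image.mpr ⟨i, Finset.mem_univ i, Function.update_self i _ a⟩
    have hm0 : ∀ i, (0:ℝ) ≤ f (Finset.univ.image (Function.update a i (s i (θ i))))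
        - f ((Finset.univ.image (Function.update a i (s i (θ i)))).erase (s i (θ i))) := by
      intro i
      exact sub_nonneg.mpr (hmono (Finset.erase_subset _ _))
    have hH : ∀ i (X : Finset E),
        (Finset.univ.image (Function.update a i (s i (θ i)))).erase (s i (θ i)) ⊆ X →
        s i (θ i) ∉ X →
        f (insert (s i (θ i)) X) - f X
          ≤ f (Finset.univ.image (Function.update a i (s i (θ i))))
            - f ((Finset.univ.image (Function.update a i (s i (θ i)))).erase (s i (θ i))) := by
      intro i X hDX htX
      have h1 := hsub hDX (s i (θ i)) htX
      rwa [Finset.insert_erase (htiB i)] at h1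
    have hDS : ∀ i ∈ (Finset.univ : Finset (Fin n)),
        (Finset.univ.image (Function.update a i (s i (θ i)))).erase (s i (θ i))
          ⊆ Finset.univ.image a := by
      intro i _ x hx
      obtain ⟨hxne, hxB⟩ := Finset.mem_erase.mp hx
      obtain ⟨j, _, hj⟩ := Finset.mem_image.mp hxB
      rcases eq_or_ne j i with rfl | hne
      · exact absurd (by simpa using hj.symm) hxne
      · rw [Function.update_of_ne hne] at hj
        exact hj ▸ Finset.mem_image_of_mem a (Finset.mem_univ j)
    have hkey := submod_key_aux (f := f) (fun i => s i (θ i))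
      (fun i => f (Finset.univ.image (Function.update a i (s i (θ i))))
        - f ((Finset.univ.image (Function.update a i (s i (θ i)))).erase (s i (θ i))))
      (fun i => (Finset.univ.image (Function.update a i (s i (θ i)))).erase (s i (θ i)))
      hm0 hH Finset.univ (Finset.univ.image a) hDS
    have hTsub : f (Finset.univ.image fun i => s i (θ i))
        ≤ f (Finset.univ.image a ∪ Finset.univ.image (fun i => s i (θ i))) :=
      hmono Finset.subset_union_right
    have hmv : ∀ i, f (Finset.univ.image (Function.update a i (s i (θ i))))
        - f ((Finset.univ.image (Function.update a i (s i (θ i)))).erase (s i (θ i)))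
        ≤ v i (Function.update a i (s i (θ i))) := by
      intro i
      have := hmarg (Function.update a i (s i (θ i))) (fun j => ⟨θ j, hb i j⟩) i
      simpa [Function.update_self] using this
    have hsum := Finset.sum_le_sum (fun i (_ : i ∈ (Finset.univ : Finset (Fin n))) => hmv i)
    linarith
  -- upper bound: sum of SFCBS right-hand sides is at most the expected welfare
  have hA : ∑ i, ∑ θ, ρ θ * ∑ a, π θ a * v i (Function.update a i (s i (θ i)))
      ≤ ∑ θ, ρ θ * ∑ a, π θ a * f (Finset.univ.image a) := by
    calc ∑ i, ∑ θ, ρ θ * ∑ a, π θ a * v i (Function.update a i (s i (θ i)))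
        ≤ ∑ i, ∑ θ, ρ θ * ∑ a, π θ a * v i a :=
          Finset.sum_le_sum fun i _ => hSFCBS i (fun t => s i t) (fun t => hsAct i t)
      _ = ∑ θ, ρ θ * ∑ a, π θ a * ∑ i, v i a := by
          rw [Finset.sum_comm]
          refine Finset.sum_congr rfl fun θ _ => ?_
          simp only [Finset.mul_sum]
          rw [Finset.sum_comm]
      _ ≤ ∑ θ, ρ θ * ∑ a, π θ a * f (Finset.univ.image a) := by
          refine Finset.sum_le_sum fun θ _ => ?_
          refine mul_le_mul_of_nonneg_left (Finset.sum_le_sum fun a _ => ?_) (hρ0 θ)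
          by_cases h : π θ a = 0
          · simp [h]
          · exact mul_le_mul_of_nonneg_left
              (htotal a (fun i => ⟨θ i, hπsupp θ a h i⟩)) (hπ0 θ a)
  -- lower bound: sum of SFCBS left-hand sides is at least STR minus expected welfare
  have hB : gSTR Act hAne ρ f - ∑ θ, ρ θ * ∑ a, π θ a * f (Finset.univ.image a)
      ≤ ∑ i, ∑ θ, ρ θ * ∑ a, π θ a * v i (Function.update a i (s i (θ i))) := by
    have hθpt : ∀ θ, ρ θ * f (Finset.univ.image fun i => s i (θ i))
        - ρ θ * ∑ a, π θ a * f (Finset.univ.image a)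
        ≤ ρ θ * ∑ a, π θ a * ∑ i, v i (Function.update a i (s i (θ i))) := by
      intro θ
      rw [← mul_sub]
      refine mul_le_mul_of_nonneg_left ?_ (hρ0 θ)
      have h1 : f (Finset.univ.image fun i => s i (θ i))
          - ∑ a, π θ a * f (Finset.univ.image a)
          = ∑ a, π θ a * (f (Finset.univ.image fun i => s i (θ i)) - f (Finset.univ.image a)) := by
        simp only [mul_sub, Finset.sum_sub_distrib, ← Finset.sum_mul, hπ1 θ, one_mul]
      rw [h1]
      refine Finset.sum_le_sum fun a _ => ?_
      by_cases h : π θ a = 0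
      · simp [h]
      · exact mul_le_mul_of_nonneg_left (keyB θ a (fun i => hπsupp θ a h i)) (hπ0 θ a)
    have hsum := Finset.sum_le_sum (fun θ (_ : θ ∈ (Finset.univ : Finset (∀ i, Θ i))) => hθpt θ)
    rw [Finset.sum_sub_distrib] at hsum
    have hswap : ∑ θ, ρ θ * ∑ a, π θ a * ∑ i, v i (Function.update a i (s i (θ i)))
        = ∑ i, ∑ θ, ρ θ * ∑ a, π θ a * v i (Function.update a i (s i (θ i))) := by
      simp only [Finset.mul_sum]
      exact sum_swap3_aux (fun θ a i => ρ θ * (π θ a * v i (Function.update a i (s i (θ i)))))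
    rw [hSTR]
    linarith [hswap ▸ hsum]
  linarith
end
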